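/- arXiv:2409.00156 — 9 statements merged into one kernel-verified Lean document; each statement's English description precedes it below -/
import Mathlib

section
/- Let n ≥ 1, ξ ∈ ℂ, and k be a positive integer. Let L be a monic polynomial of degree n over ℂ and let Q be the k-polar polynomial of L with pole ξ. Write L(z) = Σ_{ℓ=0}^{n} a_ℓ (z−ξ)^ℓ and Q(z) = Σ_{ℓ=0}^{n} b_ℓ (z−ξ)^ℓ. Then for every ℓ with 0 ≤ ℓ ≤ n−1, b_ℓ = [(n+1)(n+2)···(n+k) / ((ℓ+1)(ℓ+2)···(ℓ+k))] · a_ℓ (and a_n = b_n = 1). -/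
open Polynomial

lemma prod_eq_descFactorial (ℓ k : ℕ) :
    (∏ i ∈ Finset.range k, ((ℓ : ℂ) + 1 + i)) = ((ℓ + k).descFactorial k : ℂ) := by
  induction k with
  | zero => simp
  | succ k ih =>
    rw [Finset.prod_range_succ, ih, show ℓ + (k+1) = (ℓ + k) + 1 from rfl,
      Nat.succ_descFactorial_succ]
    push_cast
    ring

lemma taylor_derivative' (ξ : ℂ) (p : ℂ[X]) :
    Polynomial.taylor ξ (derivative p) = derivative (Polynomial.taylor ξ p) := by
  simp only [taylor_apply, derivative_comp, derivative_add, derivative_X, derivative_C,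
    add_zero, mul_one, one_mul]

lemma taylor_iterate_derivative (ξ : ℂ) (k : ℕ) (p : ℂ[X]) :
    Polynomial.taylor ξ (derivative^[k] p) = derivative^[k] (Polynomial.taylor ξ p) := by
  induction k with
  | zero => simp
  | succ k ih =>
    rw [Function.iterate_succ_apply', Function.iterate_succ_apply', taylor_derivative', ih]

/-- If `L` is a monic polynomial of degree `n ≥ 1` and `Q` is its `k`-polar polynomial
with pole `ξ`, i.e. `(d^k/dz^k)[(z−ξ)^k Q(z)] = (n+1)⋯(n+k) L(z)` with `deg Q = n`, and
`a_ℓ`, `b_ℓ` denote the Taylor coefficients of `L`, `Q` about `ξ`, then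
`b_ℓ = [(n+1)⋯(n+k)/((ℓ+1)⋯(ℓ+k))] a_ℓ` for `0 ≤ ℓ ≤ n−1`, and `a_n = b_n = 1`. -/
theorem stmt_1 (n k : ℕ) (hn : 1 ≤ n) (hk : 1 ≤ k) (ξ : ℂ) (L Q : ℂ[X])
    (hL : L.Monic) (hLdeg : L.natDegree = n) (hQdeg : Q.natDegree = n)
    (hQ : derivative^[k] ((X - C ξ) ^ k * Q)
        = C (∏ i ∈ Finset.range k, ((n : ℂ) + 1 + i)) * L) :
    (∀ ℓ < n,
      (Polynomial.taylor ξ Q).coeff ℓ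
        = (∏ i ∈ Finset.range k, ((n : ℂ) + 1 + i)) / (∏ i ∈ Finset.range k, ((ℓ : ℂ) + 1 + i))
            * (Polynomial.taylor ξ L).coeff ℓ)
    ∧ (Polynomial.taylor ξ L).coeff n = 1 ∧ (Polynomial.taylor ξ Q).coeff n = 1 := by
  set c : ℂ := ∏ i ∈ Finset.range k, ((n : ℂ) + 1 + i) with hc
  have hpow : Polynomial.taylor ξ ((X - C ξ) ^ k) = X ^ k := by
    simp [taylor_apply, pow_comp, sub_comp]
  have key : derivative^[k] (X ^ k * Polynomial.taylor ξ Q)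
      = C c * Polynomial.taylor ξ L := by
    have := congrArg (Polynomial.taylor ξ) hQ
    rw [taylor_iterate_derivative, taylor_mul, taylor_mul, taylor_C, hpow] at this
    exact this
  have keyc : ∀ m : ℕ, (((m + k).descFactorial k : ℂ)) * (Polynomial.taylor ξ Q).coeff m
      = c * (Polynomial.taylor ξ L).coeff m := by
    intro m
    have := congrArg (fun p : ℂ[X] => p.coeff m) key
    simp only [coeff_iterate_derivative, coeff_C_mul] at this
    rw [coeff_X_pow_mul] at this
    rw [← this, nsmul_eq_mul]
  have hfac : ∀ ℓ : ℕ, (∏ i ∈ Finset.range k, ((ℓ : ℂ) + 1 + i)) ≠ 0 := by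
    intro ℓ
    refine Finset.prod_ne_zero_iff.2 fun i _ => ?_
    have : ((ℓ : ℂ) + 1 + i) = ((ℓ + 1 + i : ℕ) : ℂ) := by push_cast; ring
    rw [this]
    exact Nat.cast_ne_zero.mpr (by omega)
  have hcn : c = ((n + k).descFactorial k : ℂ) := prod_eq_descFactorial n k
  have hc0 : c ≠ 0 := hfac n
  have haL : (Polynomial.taylor ξ L).coeff n = 1 := by
    have hm : (Polynomial.taylor ξ L).Monic := by
      rw [taylor_apply]; exact hL.comp_X_add_C ξ
    have := hm.coeff_natDegree
    rwa [natDegree_taylor, hLdeg] at this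
  have hbn : (Polynomial.taylor ξ Q).coeff n = 1 := by
    have h := keyc n
    rw [haL, mul_one, ← hcn] at h
    exact mul_left_cancel₀ hc0 (h.trans (mul_one c).symm)
  refine ⟨fun ℓ hℓ => ?_, haL, hbn⟩
  have h := keyc ℓ
  rw [← prod_eq_descFactorial] at h
  rw [div_mul_eq_mul_div, eq_div_iff (hfac ℓ)]
  linear_combination h
end

section
/- Let n ≥ 0 and k ≥ 1 be integers and define the polynomial g(ω) = Σ_{ℓ=0}^{n} C(n+k, ℓ+k) ω^ℓ over ℂ. Then the k-th derivative of ω^k · g(ω) equals (n+1)(n+2)···(n+k) · (1+ω)^n; that is, (d^k/dω^k)[ω^k Σ_{ℓ=0}^{n} C(n+k,ℓ+k) ω^ℓ] = (n+1)(n+2)···(n+k)(1+ω)^n as polynomials in ω. -/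
open Polynomial

lemma descFactorial_prod (n k : ℕ) :
    ((n + k).descFactorial k : ℂ) = ∏ i ∈ Finset.range k, ((n : ℂ) + 1 + i) := by
  induction k with
  | zero => simp
  | succ k ih =>
    rw [Finset.prod_range_succ, ← ih, show n + (k+1) = (n + k) + 1 from rfl,
      Nat.succ_descFactorial_succ]
    push_cast
    ring

lemma key_nat (n k ℓ : ℕ) (hℓ : ℓ ≤ n) :
    (n + k).choose (ℓ + k) * (ℓ + k).descFactorial k
      = (n + k).descFactorial k * n.choose ℓ := by
  rw [Nat.descFactorial_eq_factorial_mul_choose, Nat.descFactorial_eq_factorial_mul_choose,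
    ← mul_assoc, mul_comm ((n+k).choose (ℓ+k)) (Nat.factorial k), mul_assoc, mul_assoc,
    Nat.choose_mul (by omega)]
  simp [Nat.add_sub_cancel, mul_assoc]

/-- For `g(ω) = Σ_{ℓ=0}^{n} C(n+k, ℓ+k) ω^ℓ` over ℂ, the `k`-th derivative of
`ω^k · g(ω)` equals `(n+1)(n+2)⋯(n+k) · (1+ω)^n` as polynomials. -/
theorem stmt_3 (n k : ℕ) (hk : 1 ≤ k) :
    derivative^[k]
        ((X : ℂ[X]) ^ k * ∑ ℓ ∈ Finset.range (n + 1), C (((n + k).choose (ℓ + k) : ℂ)) * X ^ ℓ)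
      = C (∏ i ∈ Finset.range k, ((n : ℂ) + 1 + i)) * (1 + X) ^ n := by
  have h1 : (X : ℂ[X]) ^ k * ∑ ℓ ∈ Finset.range (n + 1), C (((n + k).choose (ℓ + k) : ℂ)) * X ^ ℓ
      = ∑ ℓ ∈ Finset.range (n + 1), C (((n + k).choose (ℓ + k) : ℂ)) * X ^ (ℓ + k) := by
    rw [Finset.mul_sum]
    refine Finset.sum_congr rfl fun ℓ _ => ?_
    rw [pow_add]; ring
  rw [h1, iterate_derivative_sum]
  have h2 : ((1 : ℂ[X]) + X) ^ n = ∑ ℓ ∈ Finset.range (n + 1), C ((n.choose ℓ : ℂ)) * X ^ ℓ := by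
    rw [add_comm, add_pow]
    refine Finset.sum_congr rfl fun ℓ _ => ?_
    simp [mul_comm, C_eq_natCast]
  rw [h2, Finset.mul_sum, ← descFactorial_prod]
  refine Finset.sum_congr rfl fun ℓ hℓ => ?_
  rw [iterate_derivative_C_mul, iterate_derivative_X_pow_eq_C_mul, Nat.add_sub_cancel,
    ← mul_assoc, ← mul_assoc, ← C_mul, ← C_mul]
  congr 2
  rw [← Nat.cast_mul, ← Nat.cast_mul, key_nat n k ℓ (by simpa using Nat.lt_succ_iff.mp (Finset.mem_range.mp hℓ))]
end

section
/- Let μ be a finite positive Borel measure on [-π,π] whose support is an infinite set, let n ≥ 1, and let L be a monic polynomial of degree n over ℂ satisfying the orthogonality conditions ∫_{-π}^{π} L(e^{iθ}) e^{-ijθ} dμ(θ) = 0 for j = 0, 1, ..., n−1. Then every zero z₀ of L satisfies |z₀| ≤ 1, i.e. all zeros of L lie in the closed unit disk. -/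
open Polynomial MeasureTheory

private lemma opuc_integrable_of_bdd (μ : Measure ℝ) [IsFiniteMeasure μ] {f : ℝ → ℂ}
    (hf : Continuous f) {c : ℝ} (hc : ∀ θ, ‖f θ‖ ≤ c) : Integrable f μ :=
  (integrable_const c).mono' hf.aestronglyMeasurable (Filter.Eventually.of_forall hc)

private lemma opuc_cont_w : Continuous fun θ : ℝ => Complex.exp (θ * Complex.I) :=
  Complex.continuous_exp.comp (by continuity)

private lemma opuc_norm_w (θ : ℝ) : ‖Complex.exp (θ * Complex.I)‖ = 1 := by
  simp [Complex.norm_exp]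

private lemma opuc_conj_w (θ : ℝ) : (starRingEnd ℂ) (Complex.exp (θ * Complex.I))
    = Complex.exp (-(θ * Complex.I)) := by
  rw [← Complex.exp_conj]; congr 1; simp [Complex.conj_I]

private lemma opuc_eval_bound (p : ℂ[X]) (z : ℂ) (hz : ‖z‖ = 1) :
    ‖p.eval z‖ ≤ ∑ i ∈ Finset.range (p.natDegree + 1), ‖p.coeff i‖ := by
  rw [Polynomial.eval_eq_sum_range]
  refine (norm_sum_le _ _).trans (Finset.sum_le_sum fun i _ => ?_)
  rw [norm_mul, norm_pow, hz, one_pow, mul_one]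

private lemma opuc_cont_eval (p : ℂ[X]) :
    Continuous fun θ : ℝ => p.eval (Complex.exp (θ * Complex.I)) :=
  p.continuous.comp opuc_cont_w

private lemma opuc_conj_eval (Q : ℂ[X]) (θ : ℝ) :
    (starRingEnd ℂ) (Q.eval (Complex.exp (θ * Complex.I)))
      = ∑ j ∈ Finset.range (Q.natDegree + 1),
          (starRingEnd ℂ) (Q.coeff j) * Complex.exp (-(j : ℂ) * θ * Complex.I) := by
  rw [Polynomial.eval_eq_sum_range, map_sum]
  refine Finset.sum_congr rfl fun j _ => ?_
  rw [map_mul, map_pow, opuc_conj_w, ← Complex.exp_nat_mul]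
  ring_nf

private lemma opuc_norm_emj (j : ℕ) (θ : ℝ) :
    ‖Complex.exp (-(j : ℂ) * θ * Complex.I)‖ = 1 := by
  have h : -(j : ℂ) * θ * Complex.I = ((-(j : ℝ) * θ : ℝ) : ℂ) * Complex.I := by push_cast; ring
  rw [h, opuc_norm_w]

private lemma opuc_cont_emj (j : ℕ) :
    Continuous fun θ : ℝ => Complex.exp (-(j : ℂ) * θ * Complex.I) :=
  Complex.continuous_exp.comp (by continuity)

private lemma opuc_integrable_eval_mul (μ : Measure ℝ) [IsFiniteMeasure μ] (p : ℂ[X]) {g : ℝ → ℂ}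
    (hg : Continuous g) (hg1 : ∀ θ, ‖g θ‖ ≤ 1) :
    Integrable (fun θ : ℝ => p.eval (Complex.exp (θ * Complex.I)) * g θ) μ := by
  refine opuc_integrable_of_bdd μ ((opuc_cont_eval p).mul hg)
    (c := ∑ i ∈ Finset.range (p.natDegree + 1), ‖p.coeff i‖) (fun θ => ?_)
  rw [norm_mul]
  calc ‖p.eval (Complex.exp (θ * Complex.I))‖ * ‖g θ‖
      ≤ ‖p.eval (Complex.exp (θ * Complex.I))‖ * 1 :=
        mul_le_mul_of_nonneg_left (hg1 θ) (norm_nonneg _)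
    _ ≤ _ := by rw [mul_one]; exact opuc_eval_bound p _ (opuc_norm_w θ)

private lemma opuc_integrable_nsq (μ : Measure ℝ) [IsFiniteMeasure μ] (Q : ℂ[X]) :
    Integrable (fun θ : ℝ => Complex.normSq (Q.eval (Complex.exp (θ * Complex.I)))) μ := by
  set c := ∑ i ∈ Finset.range (Q.natDegree + 1), ‖Q.coeff i‖ with hc
  refine (integrable_const (c^2)).mono'
    ((Complex.continuous_normSq.comp (opuc_cont_eval Q)).aestronglyMeasurable)
    (Filter.Eventually.of_forall fun θ => ?_)
  have h1 : ‖Q.eval (Complex.exp (θ * Complex.I))‖ ≤ c := opuc_eval_bound Q _ (opuc_norm_w θ)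
  have h2 : Complex.normSq (Q.eval (Complex.exp (θ * Complex.I)))
      = ‖Q.eval (Complex.exp (θ * Complex.I))‖^2 := by
    rw [Complex.normSq_eq_norm_sq]
  rw [Real.norm_eq_abs, abs_of_nonneg (Complex.normSq_nonneg _), h2]
  exact pow_le_pow_left₀ (norm_nonneg _) h1 2

private lemma opuc_key1 (μ : Measure ℝ) [IsFiniteMeasure μ] (n : ℕ) (L Q : ℂ[X])
    (hQn : Q.natDegree < n)
    (horth : ∀ j < n,
      ∫ θ : ℝ, L.eval (Complex.exp (θ * Complex.I)) * Complex.exp (-(j : ℂ) * θ * Complex.I) ∂μ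
        = 0) :
    ∫ θ : ℝ, L.eval (Complex.exp (θ * Complex.I)) *
      (starRingEnd ℂ) (Q.eval (Complex.exp (θ * Complex.I))) ∂μ = 0 := by
  have h1 : ∀ θ : ℝ, L.eval (Complex.exp (θ * Complex.I)) *
      (starRingEnd ℂ) (Q.eval (Complex.exp (θ * Complex.I)))
      = ∑ j ∈ Finset.range (Q.natDegree + 1),
          (starRingEnd ℂ) (Q.coeff j) *
            (L.eval (Complex.exp (θ * Complex.I)) * Complex.exp (-(j : ℂ) * θ * Complex.I)) := by
    intro θ
    rw [opuc_conj_eval, Finset.mul_sum]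
    exact Finset.sum_congr rfl fun j _ => by ring
  simp only [h1]
  rw [integral_finset_sum]
  · refine Finset.sum_eq_zero fun j hj => ?_
    rw [MeasureTheory.integral_const_mul, horth j (by have := Finset.mem_range.mp hj; omega),
      mul_zero]
  · intro j _
    exact (opuc_integrable_eval_mul μ L (opuc_cont_emj j)
      (fun θ => (opuc_norm_emj j θ).le)).const_mul _

private lemma opuc_Apos (μ : Measure ℝ) [IsFiniteMeasure μ]
    (hsupp : μ (Set.Icc (-Real.pi) Real.pi)ᶜ = 0)
    (hinf : {x : ℝ | ∀ U ∈ nhds x, μ U ≠ 0}.Infinite)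
    (Q : ℂ[X]) (hQ0 : Q ≠ 0) :
    0 < ∫ θ : ℝ, Complex.normSq (Q.eval (Complex.exp (θ * Complex.I))) ∂μ := by
  set f : ℝ → ℝ := fun θ => Complex.normSq (Q.eval (Complex.exp (θ * Complex.I))) with hf
  have hfc : Continuous f := Complex.continuous_normSq.comp (opuc_cont_eval Q)
  have hfnn : ∀ θ, 0 ≤ f θ := fun θ => Complex.normSq_nonneg _
  have hint : Integrable f μ := opuc_integrable_nsq μ Q
  rcases lt_or_eq_of_le (integral_nonneg (f := f) hfnn) with h | h
  · exact h
  exfalso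
  have hae : f =ᵐ[μ] 0 := (integral_eq_zero_iff_of_nonneg hfnn hint).mp h.symm
  have hnull : μ {θ : ℝ | f θ ≠ 0} = 0 := by
    have h' := hae
    rw [Filter.EventuallyEq, ae_iff] at h'
    simpa using h'
  set S := {x : ℝ | ∀ U ∈ nhds x, μ U ≠ 0} with hS
  have hsub : S ⊆ {θ : ℝ | θ ∈ Set.Icc (-Real.pi) Real.pi ∧
      Q.eval (Complex.exp (θ * Complex.I)) = 0} := by
    intro x hx
    constructor
    · by_contra hxI
      exact hx _ ((isClosed_Icc.isOpen_compl).mem_nhds hxI) hsupp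
    · by_contra hxQ
      have hopen : IsOpen {θ : ℝ | f θ ≠ 0} := isOpen_ne.preimage hfc
      have hmem : x ∈ {θ : ℝ | f θ ≠ 0} := by
        simp only [Set.mem_setOf_eq, hf]
        exact fun hc => hxQ (Complex.normSq_eq_zero.mp hc)
      exact hx _ (hopen.mem_nhds hmem) hnull
  refine hinf (Set.Finite.subset ?_ hsub)
  have hcover : {θ : ℝ | θ ∈ Set.Icc (-Real.pi) Real.pi ∧
        Q.eval (Complex.exp (θ * Complex.I)) = 0}
      ⊆ ⋃ z ∈ Q.roots.toFinset,
        {θ : ℝ | θ ∈ Set.Icc (-Real.pi) Real.pi ∧ Complex.exp (θ * Complex.I) = z} := by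
    rintro θ ⟨h1, h2⟩
    exact Set.mem_biUnion (Multiset.mem_toFinset.mpr ((mem_roots hQ0).mpr h2)) ⟨h1, rfl⟩
  refine Set.Finite.subset (Set.Finite.biUnion (Q.roots.toFinset.finite_toSet) fun z _ => ?_) hcover
  by_cases he : ∃ t, t ∈ Set.Icc (-Real.pi) Real.pi ∧ Complex.exp ((t:ℝ) * Complex.I) = z
  · obtain ⟨t, htI, htz⟩ := he
    refine Set.Finite.subset (((Set.finite_singleton (t + 2*Real.pi)).insert t).insert
      (t - 2*Real.pi)) ?_
    rintro θ ⟨hθI, hθz⟩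
    have hee : Complex.exp ((θ:ℝ) * Complex.I) = Complex.exp ((t:ℝ) * Complex.I) := by
      rw [hθz, htz]
    rw [Complex.exp_eq_exp_iff_exists_int] at hee
    obtain ⟨k, hk⟩ := hee
    have h2 : (θ:ℂ) * Complex.I = ((t + (k:ℝ) * (2*Real.pi) : ℝ) : ℂ) * Complex.I := by
      rw [hk]; push_cast; ring
    have h4 : θ = t + (k:ℝ) * (2*Real.pi) := by
      exact_mod_cast mul_right_cancel₀ Complex.I_ne_zero h2
    have hπ := Real.pi_pos
    obtain ⟨hθ1, hθ2⟩ := hθI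
    obtain ⟨ht1, ht2⟩ := htI
    have hk1 : -1 ≤ k := by
      by_contra hcon
      push_neg at hcon
      have hk2' : k ≤ -2 := by omega
      have : (k:ℝ) ≤ -2 := by exact_mod_cast hk2'
      nlinarith
    have hk2 : k ≤ 1 := by
      by_contra hcon
      push_neg at hcon
      have : (2:ℝ) ≤ (k:ℝ) := by exact_mod_cast hcon
      nlinarith
    interval_cases k
    · refine Set.mem_insert_iff.mpr (Or.inl ?_)
      rw [h4]; push_cast; ring
    · refine Set.mem_insert_iff.mpr (Or.inr (Set.mem_insert_iff.mpr (Or.inl ?_)))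
      rw [h4]; push_cast; ring
    · refine Set.mem_insert_iff.mpr (Or.inr (Set.mem_insert_iff.mpr (Or.inr ?_)))
      rw [Set.mem_singleton_iff, h4]; push_cast; ring
  · push_neg at he
    have hempty : {θ : ℝ | θ ∈ Set.Icc (-Real.pi) Real.pi
        ∧ Complex.exp ((θ:ℝ) * Complex.I) = z} = ∅ := by
      ext θ
      simp only [Set.mem_setOf_eq, Set.mem_empty_iff_false, iff_false, not_and]
      exact he θ
    rw [hempty]; exact Set.finite_empty

/-- If `μ` is a finite positive Borel measure on `[-π,π]` with infinite (topological)
support, `n ≥ 1`, and `L` is a monic polynomial of degree `n` satisfying the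
orthogonality conditions `∫ L(e^{iθ}) e^{-ijθ} dμ(θ) = 0` for `j = 0,…,n−1`, then
every zero of `L` lies in the closed unit disk. -/
theorem stmt_6 (μ : Measure ℝ) [IsFiniteMeasure μ]
    (hsupp : μ (Set.Icc (-Real.pi) Real.pi)ᶜ = 0)
    (hinf : {x : ℝ | ∀ U ∈ nhds x, μ U ≠ 0}.Infinite)
    (n : ℕ) (hn : 1 ≤ n) (L : ℂ[X]) (hL : L.Monic) (hLdeg : L.natDegree = n)
    (horth : ∀ j < n,
      ∫ θ : ℝ, L.eval (Complex.exp (θ * Complex.I)) * Complex.exp (-(j : ℂ) * θ * Complex.I) ∂μ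
        = 0) :
    ∀ z : ℂ, L.IsRoot z → ‖z‖ ≤ 1 := by
  intro z₀ hz₀
  by_contra hgt
  push_neg at hgt
  obtain ⟨Q, hQfac⟩ := dvd_iff_isRoot.mpr hz₀
  have hQm : Q.Monic := (monic_X_sub_C z₀).of_mul_monic_left (hQfac ▸ hL)
  have hQ0 : Q ≠ 0 := hQm.ne_zero
  have hdegQ : Q.natDegree < n := by
    have h := congrArg natDegree hQfac
    rw [natDegree_mul (X_sub_C_ne_zero z₀) hQ0, natDegree_X_sub_C, hLdeg] at h
    omega
  set nsq : ℝ → ℝ := fun θ => Complex.normSq (Q.eval (Complex.exp (θ * Complex.I))) with hnsq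
  set A : ℝ := ∫ θ : ℝ, nsq θ ∂μ with hA
  have hApos : 0 < A := opuc_Apos μ hsupp hinf Q hQ0
  have key1 := opuc_key1 μ n L Q hdegQ horth
  -- pointwise identity
  have hpt : ∀ θ : ℝ, L.eval (Complex.exp (θ * Complex.I)) *
      (starRingEnd ℂ) (Q.eval (Complex.exp (θ * Complex.I)))
      = Complex.exp (θ * Complex.I) * (nsq θ : ℂ) - z₀ * (nsq θ : ℂ) := by
    intro θ
    have : (nsq θ : ℂ) = Q.eval (Complex.exp (θ * Complex.I)) *
        (starRingEnd ℂ) (Q.eval (Complex.exp (θ * Complex.I))) := (Complex.mul_conj _).symm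
    rw [this, hQfac, eval_mul, eval_sub, eval_X, eval_C]
    ring
  -- integrability
  have hnsqC_cont : Continuous fun θ : ℝ => (nsq θ : ℂ) :=
    Complex.continuous_ofReal.comp (Complex.continuous_normSq.comp (opuc_cont_eval Q))
  have hiznsq : Integrable (fun θ : ℝ => (nsq θ : ℂ)) μ := (opuc_integrable_nsq μ Q).ofReal
  have hiw : Integrable (fun θ : ℝ => Complex.exp (θ * Complex.I) * (nsq θ : ℂ)) μ := by
    refine opuc_integrable_of_bdd μ (opuc_cont_w.mul hnsqC_cont)
      (c := (∑ i ∈ Finset.range (Q.natDegree + 1), ‖Q.coeff i‖)^2) (fun θ => ?_)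
    rw [norm_mul, opuc_norm_w, one_mul, Complex.norm_real, Real.norm_eq_abs,
      abs_of_nonneg (Complex.normSq_nonneg _)]
    have h1 : ‖Q.eval (Complex.exp (θ * Complex.I))‖ ≤ _ := opuc_eval_bound Q _ (opuc_norm_w θ)
    have h2 : Complex.normSq (Q.eval (Complex.exp (θ * Complex.I)))
        = ‖Q.eval (Complex.exp (θ * Complex.I))‖^2 := by
      rw [Complex.normSq_eq_norm_sq]
    show Complex.normSq (Q.eval (Complex.exp (θ * Complex.I))) ≤ _
    rw [h2]
    exact pow_le_pow_left₀ (norm_nonneg _) h1 2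
  have hiz : Integrable (fun θ : ℝ => z₀ * (nsq θ : ℂ)) μ := hiznsq.const_mul z₀
  -- key2
  have key2 : ∫ θ : ℝ, Complex.exp (θ * Complex.I) * (nsq θ : ℂ) ∂μ = z₀ * (A : ℂ) := by
    have h0 : ∫ θ : ℝ, (Complex.exp (θ * Complex.I) * (nsq θ : ℂ) - z₀ * (nsq θ : ℂ)) ∂μ = 0 := by
      rw [← key1]
      exact integral_congr_ae (Filter.Eventually.of_forall fun θ => (hpt θ).symm)
    rw [integral_sub hiw hiz] at h0
    have h1 : ∫ θ : ℝ, z₀ * (nsq θ : ℂ) ∂μ = z₀ * (A : ℂ) := by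
      rw [MeasureTheory.integral_const_mul]
      congr 1
      rw [hA]
      exact integral_ofReal
    rw [sub_eq_zero] at h0
    rw [h0, h1]
  -- norm inequality
  have hineq : ‖∫ θ : ℝ, Complex.exp (θ * Complex.I) * (nsq θ : ℂ) ∂μ‖ ≤ A := by
    refine (norm_integral_le_integral_norm _).trans ?_
    have : ∀ θ : ℝ, ‖Complex.exp (θ * Complex.I) * (nsq θ : ℂ)‖ = nsq θ := fun θ => by
      rw [norm_mul, opuc_norm_w, one_mul, Complex.norm_real, Real.norm_eq_abs,
        abs_of_nonneg (Complex.normSq_nonneg _)]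
    rw [hA]
    exact le_of_eq (integral_congr_ae (Filter.Eventually.of_forall this))
  rw [key2] at hineq
  have : ‖z₀‖ * A ≤ A := by
    have h := hineq
    rw [norm_mul, Complex.norm_real, Real.norm_eq_abs,
      abs_of_nonneg hApos.le] at h
    exact h
  nlinarith
end

section
/- Let P(z) = z^n + a_{n−1}z^{n−1} + ··· + a_1 z + a_0 be a monic complex polynomial of degree n ≥ 1, and let B = max{|a_0|, ..., |a_{n−1}|}. Then every zero z of P satisfies |z| ≥ |a_0| / (2(1+B)^{n−1}(1+nB)). -/
open Polynomial

/-- Datt–Govil lower bound: if `P(z) = z^n + a_{n−1}z^{n−1} + ⋯ + a_0` is a monic complex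
polynomial of degree `n ≥ 1` and `B = max{|a_0|,…,|a_{n−1}|}`, then every zero `z` of `P`
satisfies `|z| ≥ |a_0| / (2(1+B)^{n−1}(1+nB))`. -/
theorem stmt_9 (n : ℕ) (hn : 1 ≤ n) (P : ℂ[X]) (hP : P.Monic) (hPdeg : P.natDegree = n)
    (B : ℝ) (hB : B = ((Finset.range n).sup fun i => ‖P.coeff i‖₊ : NNReal)) :
    ∀ z : ℂ, P.IsRoot z →
      ‖P.coeff 0‖ / (2 * (1 + B) ^ (n - 1) * (1 + n * B)) ≤ ‖z‖ := by
  obtain ⟨m, rfl⟩ : ∃ m, n = m + 1 := ⟨n - 1, (Nat.succ_pred_eq_of_pos hn).symm⟩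
  intro z hz
  have hB0 : 0 ≤ B := by rw [hB]; exact NNReal.coe_nonneg _
  have hcoeff : ∀ i, i < m + 1 → ‖P.coeff i‖ ≤ B := by
    intro i hi
    rw [hB, ← coe_nnnorm]
    exact_mod_cast Finset.le_sup (f := fun i => ‖P.coeff i‖₊) (Finset.mem_range.mpr hi)
  have hQ : (1:ℝ) ≤ (1 + B) ^ m := one_le_pow₀ (by linarith)
  have hD : 0 < 2 * (1 + B) ^ m * (1 + ((m : ℝ) + 1) * B) := by positivity
  simp only [Nat.add_sub_cancel]
  push_cast
  rw [div_le_iff₀ hD]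
  have ha0B : ‖P.coeff 0‖ ≤ B := hcoeff 0 (Nat.succ_pos m)
  have hr0 : 0 ≤ ‖z‖ := norm_nonneg z
  rcases le_or_gt 1 (‖z‖) with h1 | h1
  · -- |z| ≥ 1 : |a0| ≤ B ≤ D ≤ |z| * D
    have h2 : B ≤ 2 * (1 + B) ^ m * (1 + ((m : ℝ) + 1) * B) := by
      nlinarith [mul_nonneg (Nat.cast_nonneg m : (0:ℝ) ≤ m) hB0]
    nlinarith [mul_le_mul_of_nonneg_right h1 hD.le]
  · -- |z| < 1
    have hev : ∑ i ∈ Finset.range (m + 1 + 1), P.coeff i * z ^ i = 0 := by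
      rw [← Polynomial.eval_eq_sum_range' (by omega : P.natDegree < m + 1 + 1)]
      exact hz
    rw [Finset.sum_range_succ'] at hev
    simp only [pow_zero, mul_one] at hev
    have h0 : P.coeff 0 = -∑ i ∈ Finset.range (m + 1), P.coeff (i + 1) * z ^ (i + 1) :=
      eq_neg_of_add_eq_zero_right hev
    have hpowle : ∀ i : ℕ, (‖z‖) ^ (i + 1) ≤ ‖z‖ := by
      intro i
      calc (‖z‖) ^ (i + 1) ≤ (‖z‖) ^ 1 :=
            pow_le_pow_of_le_one hr0 h1.le (by omega)
        _ = ‖z‖ := pow_one _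
    have habs : ‖P.coeff 0‖ ≤
        ∑ i ∈ Finset.range (m + 1), ‖P.coeff (i + 1)‖ * (‖z‖) ^ (i + 1) := by
      rw [h0]
      simp only [norm_neg]
      calc ‖∑ i ∈ Finset.range (m + 1), P.coeff (i + 1) * z ^ (i + 1)‖
          ≤ ∑ i ∈ Finset.range (m + 1), ‖P.coeff (i + 1) * z ^ (i + 1)‖ := norm_sum_le _ _
        _ = ∑ i ∈ Finset.range (m + 1), ‖P.coeff (i + 1)‖ * ‖z‖ ^ (i + 1) := by
            simp [norm_mul, norm_pow]
    have hlead : P.coeff (m + 1) = 1 := by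
      have := hP.coeff_natDegree
      rwa [hPdeg] at this
    have hsum : ∑ i ∈ Finset.range (m + 1), ‖P.coeff (i + 1)‖ * (‖z‖) ^ (i + 1)
        ≤ (m : ℝ) * (B * ‖z‖) + ‖z‖ := by
      rw [Finset.sum_range_succ, hlead]
      simp only [norm_one, one_mul]
      have hsum' : ∑ i ∈ Finset.range m, ‖P.coeff (i + 1)‖ * (‖z‖) ^ (i + 1)
          ≤ ∑ _i ∈ Finset.range m, B * ‖z‖ := by
        apply Finset.sum_le_sum
        intro i hi
        have hci : ‖P.coeff (i + 1)‖ ≤ B :=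
          hcoeff (i + 1) (Nat.succ_lt_succ (Finset.mem_range.mp hi))
        exact mul_le_mul hci (hpowle i) (by positivity) hB0
      have := hpowle m
      rw [Finset.sum_const, Finset.card_range, nsmul_eq_mul] at hsum'
      linarith
    have h2 : 2 * (1 + ((m : ℝ) + 1) * B) ≤ 2 * (1 + B) ^ m * (1 + ((m : ℝ) + 1) * B) := by
      nlinarith [mul_nonneg (Nat.cast_nonneg m : (0:ℝ) ≤ m) hB0]
    nlinarith [mul_le_mul_of_nonneg_left h2 hr0,
      mul_nonneg (mul_nonneg (Nat.cast_nonneg m : (0:ℝ) ≤ m) hB0) hr0]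
end

section
/- Let n ≥ 1 and let a(z) = Σ_{ℓ=0}^{n} a_ℓ C(n,ℓ) z^ℓ and b(z) = Σ_{ℓ=0}^{n} b_ℓ C(n,ℓ) z^ℓ be complex polynomials with a_n ≠ 0 and b_n ≠ 0. If all zeros of a(z) lie in the closed unit disk and all zeros of b(z) lie in the closed unit disk, then all zeros of the composition c(z) = Σ_{ℓ=0}^{n} a_ℓ b_ℓ C(n,ℓ) z^ℓ also lie in the closed unit disk. -/
open Polynomial Finset

noncomputable def bpoly (N : ℕ) (p : ℕ → ℂ) : Polynomial ℂ :=
  ∑ ℓ ∈ Finset.range (N+1), C (p ℓ * (N.choose ℓ : ℂ)) * X ^ ℓ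

lemma bpoly_coeff (N : ℕ) (p : ℕ → ℂ) (k : ℕ) :
    (bpoly N p).coeff k = if k ≤ N then p k * (N.choose k : ℂ) else 0 := by
  rw [bpoly, finset_sum_coeff]
  simp only [coeff_C_mul, coeff_X_pow]
  rw [Finset.sum_eq_single k]
  · rw [if_pos rfl, mul_one]
    split_ifs with h
    · rfl
    · have : N.choose k = 0 := Nat.choose_eq_zero_of_lt (by omega)
      simp [this]
  · intro b _ hb; simp [Ne.symm hb]
  · intro h
    simp only [Finset.mem_range, not_lt] at h
    simp [if_pos rfl, Nat.choose_eq_zero_of_lt (by omega : N < k)]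

lemma bpoly_eval (N : ℕ) (p : ℕ → ℂ) (z : ℂ) :
    (bpoly N p).eval z = ∑ ℓ ∈ Finset.range (N+1), p ℓ * (N.choose ℓ : ℂ) * z ^ ℓ := by
  rw [bpoly, eval_finset_sum]
  simp

lemma bpoly_natDegree (N : ℕ) (p : ℕ → ℂ) (h : p N ≠ 0) :
    (bpoly N p).natDegree = N := by
  apply le_antisymm
  · rw [natDegree_le_iff_coeff_eq_zero]
    intro m hm
    rw [bpoly_coeff, if_neg (by omega)]
  · apply le_natDegree_of_ne_zero
    rw [bpoly_coeff, if_pos le_rfl, Nat.choose_self]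
    simpa using h

lemma bpoly_ne_zero (N : ℕ) (p : ℕ → ℂ) (h : p N ≠ 0) : bpoly N p ≠ 0 := by
  intro h0
  have := bpoly_coeff N p N
  rw [h0] at this
  simp only [coeff_zero, if_pos le_rfl, Nat.choose_self, Nat.cast_one, mul_one] at this
  exact h this.symm

lemma bpoly_leadingCoeff (N : ℕ) (p : ℕ → ℂ) (h : p N ≠ 0) :
    (bpoly N p).leadingCoeff = p N := by
  rw [leadingCoeff, bpoly_natDegree N p h, bpoly_coeff, if_pos le_rfl, Nat.choose_self]
  simp

lemma bpoly_roots_card (N : ℕ) (p : ℕ → ℂ) (h : p N ≠ 0) :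
    Multiset.card (bpoly N p).roots = N := by
  have hs : (bpoly N p).Splits := IsAlgClosed.splits _
  have := (hs.natDegree_eq_card_roots).symm
  rw [this, bpoly_natDegree N p h]

lemma bpoly_eq_prod (N : ℕ) (p : ℕ → ℂ) (h : p N ≠ 0) :
    bpoly N p = C (p N) * ((bpoly N p).roots.map fun r => X - C r).prod := by
  have hs : (bpoly N p).Splits := IsAlgClosed.splits _
  have := hs.eq_prod_roots
  rwa [bpoly_leadingCoeff N p h] at this

lemma normSq_ident (w z : ℂ) :
    Complex.normSq ((starRingEnd ℂ) w * z - 1) - Complex.normSq (w - z)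
      = (Complex.normSq w - 1) * (Complex.normSq z - 1) := by
  simp only [Complex.normSq_apply, Complex.sub_re, Complex.sub_im, Complex.mul_re,
    Complex.mul_im, Complex.conj_re, Complex.conj_im, Complex.one_re, Complex.one_im]
  ring

lemma key_iff (w z : ℂ) (hw : 1 < ‖w‖) (hzw : w - z ≠ 0) :
    ‖1/(w - z) - (starRingEnd ℂ) w / ((Complex.normSq w : ℂ) - 1)‖
      ≤ 1/(Complex.normSq w - 1) ↔ ‖z‖ ≤ 1 := by
  have hd : (0:ℝ) < Complex.normSq w - 1 := by
    have := Complex.sq_norm w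
    nlinarith [norm_nonneg w]
  have hdc : ((Complex.normSq w : ℂ) - 1) ≠ 0 := by
    intro h
    have h1 : (Complex.normSq w : ℂ) = 1 := sub_eq_zero.mp h
    have h2 : Complex.normSq w = 1 := by exact_mod_cast h1
    linarith
  have key : 1/(w - z) - (starRingEnd ℂ) w / ((Complex.normSq w : ℂ) - 1)
      = ((starRingEnd ℂ) w * z - 1) / (((Complex.normSq w : ℂ) - 1) * (w - z)) := by
    field_simp
    rw [← Complex.mul_conj]
    ring
  rw [key, norm_div, norm_mul]
  have habs : ‖(Complex.normSq w : ℂ) - 1‖ = Complex.normSq w - 1 := by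
    rw [show ((Complex.normSq w : ℂ) - 1) = ((Complex.normSq w - 1 : ℝ) : ℂ) by push_cast; ring,
      Complex.norm_real, Real.norm_eq_abs, abs_of_pos hd]
  rw [habs]
  have hwz : 0 < ‖w - z‖ := by
    simpa [norm_pos_iff] using hzw
  rw [div_le_div_iff₀ (by positivity) hd]
  have step1 : ‖(starRingEnd ℂ) w * z - 1‖ * (Complex.normSq w - 1)
      ≤ (Complex.normSq w - 1) * ‖w - z‖
      ↔ ‖(starRingEnd ℂ) w * z - 1‖ ≤ ‖w - z‖ := by
    rw [mul_comm]
    exact mul_le_mul_iff_right₀ hd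
  rw [one_mul, step1]
  have hsq : ‖(starRingEnd ℂ) w * z - 1‖ ≤ ‖w - z‖
      ↔ Complex.normSq ((starRingEnd ℂ) w * z - 1) ≤ Complex.normSq (w - z) := by
    constructor
    · intro h
      have := Complex.sq_norm ((starRingEnd ℂ) w * z - 1)
      have := Complex.sq_norm (w - z)
      nlinarith [norm_nonneg ((starRingEnd ℂ) w * z - 1), norm_nonneg (w - z)]
    · intro h
      have := Complex.sq_norm ((starRingEnd ℂ) w * z - 1)
      have := Complex.sq_norm (w - z)
      nlinarith [norm_nonneg ((starRingEnd ℂ) w * z - 1), norm_nonneg (w - z)]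
  rw [hsq]
  have := normSq_ident w z
  constructor
  · intro h
    have hz : Complex.normSq z ≤ 1 := by nlinarith
    have := Complex.sq_norm z
    nlinarith [norm_nonneg z]
  · intro h
    have hz : Complex.normSq z ≤ 1 := by
      have := Complex.sq_norm z
      nlinarith [norm_nonneg z]
    nlinarith

lemma multiset_sum_ball (c : ℂ) (ρ : ℝ) (M : Multiset ℂ)
    (h : ∀ x ∈ M, ‖x - c‖ ≤ ρ) :
    ‖M.sum - (M.card : ℂ) * c‖ ≤ (M.card : ℝ) * ρ := by
  induction M using Multiset.induction_on with
  | empty => simp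
  | cons x M ih =>
    have hx := h x (Multiset.mem_cons_self x M)
    have hM := ih (fun y hy => h y (Multiset.mem_cons_of_mem hy))
    simp only [Multiset.sum_cons, Multiset.card_cons]
    have : (x + M.sum) - (((M.card : ℕ) + 1 : ℕ) : ℂ) * c
        = (x - c) + (M.sum - (M.card : ℂ) * c) := by push_cast; ring
    rw [this]
    calc ‖_‖ ≤ _ := norm_add_le _ _
      _ ≤ ρ + (M.card : ℝ) * ρ := add_le_add hx hM
      _ = ((M.card + 1 : ℕ) : ℝ) * ρ := by push_cast; ring

lemma multiset_abs_sum_le (M : Multiset ℂ) (h : ∀ x ∈ M, ‖x‖ ≤ 1) :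
    ‖M.sum‖ ≤ (M.card : ℝ) := by
  have := multiset_sum_ball 0 1 M (by simpa using h)
  simpa using this

lemma deriv_prod_eval (u : ℂ) (M : Multiset ℂ) (hM : ∀ r ∈ M, u - r ≠ 0) :
    Polynomial.eval u (Polynomial.derivative (M.map (fun r => X - C r)).prod)
      = Polynomial.eval u ((M.map (fun r => X - C r)).prod)
        * (M.map (fun r => (u - r)⁻¹)).sum := by
  induction M using Multiset.induction_on with
  | empty => simp
  | cons x M ih =>
    have hx := hM x (Multiset.mem_cons_self x M)
    have hM' := ih (fun y hy => hM y (Multiset.mem_cons_of_mem hy))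
    simp only [Multiset.map_cons, Multiset.prod_cons, Multiset.sum_cons, derivative_mul,
      eval_mul, eval_add, eval_sub, eval_X, eval_C, derivative_sub, derivative_X, derivative_C,
      sub_zero, eval_one, hM']
    field_simp

lemma bpoly_deriv_eval (n : ℕ) (p : ℕ → ℂ) (u : ℂ) :
    (Polynomial.derivative (bpoly (n+1) p)).eval u
      = ∑ ℓ ∈ Finset.range (n+1),
          p (ℓ+1) * (((n+1).choose (ℓ+1)) : ℂ) * ((ℓ+1 : ℕ) : ℂ) * u ^ ℓ := by
  rw [bpoly, derivative_sum, eval_finset_sum]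
  have h : ∀ ℓ ∈ Finset.range (n+2),
      (Polynomial.derivative (C (p ℓ * ((n+1).choose ℓ : ℂ)) * X ^ ℓ)).eval u
        = p ℓ * (((n+1).choose ℓ) : ℂ) * ((ℓ : ℕ) : ℂ) * u ^ (ℓ - 1) := by
    intro ℓ _
    rw [derivative_C_mul, derivative_X_pow]
    simp only [eval_mul, eval_C, eval_pow, eval_X, eval_natCast]
    ring
  rw [Finset.sum_congr rfl h, Finset.sum_range_succ']
  simp

lemma cast_succ_mul_choose (n ℓ : ℕ) :
    ((n : ℂ)+1) * (n.choose ℓ : ℂ) = (((n+1).choose (ℓ+1)) : ℂ) * ((ℓ+1 : ℕ) : ℂ) := by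
  have := Nat.add_one_mul_choose_eq n ℓ
  exact_mod_cast congrArg (Nat.cast : ℕ → ℂ) this

lemma ident (n : ℕ) (a : ℕ → ℂ) (z0 w u : ℂ) :
    (z0 + w * u) * (∑ ℓ ∈ Finset.range (n+1),
        a (ℓ+1) * (((n+1).choose (ℓ+1)) : ℂ) * ((ℓ+1 : ℕ) : ℂ) * u ^ ℓ)
      - ((n : ℂ)+1) * w * (∑ ℓ ∈ Finset.range (n+2), a ℓ * (((n+1).choose ℓ) : ℂ) * u ^ ℓ)
    = ((n : ℂ)+1) * ∑ ℓ ∈ Finset.range (n+1),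
        (z0 * a (ℓ+1) - w * a ℓ) * ((n.choose ℓ) : ℂ) * u ^ ℓ := by
  have hB : ∀ ℓ : ℕ, ((n : ℂ)+1) * (((n+1).choose ℓ) : ℂ)
      = ((n : ℂ)+1) * ((n.choose ℓ) : ℂ) + (ℓ : ℂ) * (((n+1).choose ℓ) : ℂ) := by
    intro ℓ
    match ℓ with
    | 0 => simp
    | (k+1) =>
      have h1 := cast_succ_mul_choose n k
      have h2 : (((n+1).choose (k+1)) : ℂ) = ((n.choose k) : ℂ) + ((n.choose (k+1)) : ℂ) := by
        exact_mod_cast congrArg (Nat.cast : ℕ → ℂ) (Nat.choose_succ_succ n k)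
      push_cast at h1 h2 ⊢
      linear_combination ((n:ℂ)+1) * h2 + h1
  have c1 : z0 * (∑ ℓ ∈ Finset.range (n+1),
        a (ℓ+1) * (((n+1).choose (ℓ+1)) : ℂ) * ((ℓ+1 : ℕ) : ℂ) * u ^ ℓ)
      = ((n : ℂ)+1) * ∑ ℓ ∈ Finset.range (n+1),
          z0 * a (ℓ+1) * ((n.choose ℓ) : ℂ) * u ^ ℓ := by
    rw [Finset.mul_sum, Finset.mul_sum]
    refine Finset.sum_congr rfl fun ℓ _ => ?_
    linear_combination (-(z0 * a (ℓ+1) * u ^ ℓ)) * cast_succ_mul_choose n ℓ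
  have c2 : w * u * (∑ ℓ ∈ Finset.range (n+1),
        a (ℓ+1) * (((n+1).choose (ℓ+1)) : ℂ) * ((ℓ+1 : ℕ) : ℂ) * u ^ ℓ)
      = ∑ ℓ ∈ Finset.range (n+2), w * (ℓ : ℂ) * a ℓ * (((n+1).choose ℓ) : ℂ) * u ^ ℓ := by
    rw [show (∑ ℓ ∈ Finset.range (n+2), w * (ℓ : ℂ) * a ℓ * (((n+1).choose ℓ) : ℂ) * u ^ ℓ)
        = (∑ ℓ ∈ Finset.range (n+1),
            w * ((ℓ+1 : ℕ) : ℂ) * a (ℓ+1) * (((n+1).choose (ℓ+1)) : ℂ) * u ^ (ℓ+1))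
          + w * ((0:ℕ) : ℂ) * a 0 * (((n+1).choose 0) : ℂ) * u ^ 0
        from Finset.sum_range_succ' _ (n+1)]
    rw [Finset.mul_sum]
    simp only [Nat.cast_zero, mul_zero, zero_mul, add_zero]
    refine Finset.sum_congr rfl fun ℓ _ => ?_
    rw [pow_succ]
    ring
  have c3 : ((n : ℂ)+1) * w * (∑ ℓ ∈ Finset.range (n+2), a ℓ * (((n+1).choose ℓ) : ℂ) * u ^ ℓ)
      = (∑ ℓ ∈ Finset.range (n+2), ((n : ℂ)+1) * w * (a ℓ * ((n.choose ℓ) : ℂ) * u ^ ℓ))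
        + ∑ ℓ ∈ Finset.range (n+2), w * (ℓ : ℂ) * a ℓ * (((n+1).choose ℓ) : ℂ) * u ^ ℓ := by
    rw [← Finset.sum_add_distrib, Finset.mul_sum]
    refine Finset.sum_congr rfl fun ℓ _ => ?_
    linear_combination (w * a ℓ * u ^ ℓ) * hB ℓ
  have c4 : (∑ ℓ ∈ Finset.range (n+2), ((n : ℂ)+1) * w * (a ℓ * ((n.choose ℓ) : ℂ) * u ^ ℓ))
      = ((n : ℂ)+1) * w * ∑ ℓ ∈ Finset.range (n+1), a ℓ * ((n.choose ℓ) : ℂ) * u ^ ℓ := by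
    rw [Finset.sum_range_succ, Nat.choose_eq_zero_of_lt (by omega)]
    rw [Finset.mul_sum]
    simp
  have expand : ((n : ℂ)+1) * ∑ ℓ ∈ Finset.range (n+1),
        (z0 * a (ℓ+1) - w * a ℓ) * ((n.choose ℓ) : ℂ) * u ^ ℓ
      = (((n : ℂ)+1) * ∑ ℓ ∈ Finset.range (n+1), z0 * a (ℓ+1) * ((n.choose ℓ) : ℂ) * u ^ ℓ)
        - ((n : ℂ)+1) * w * ∑ ℓ ∈ Finset.range (n+1), a ℓ * ((n.choose ℓ) : ℂ) * u ^ ℓ := by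
    rw [Finset.mul_sum, Finset.mul_sum, Finset.mul_sum, ← Finset.sum_sub_distrib]
    refine Finset.sum_congr rfl fun ℓ _ => ?_
    ring
  rw [expand, ← c1, ← c4]
  linear_combination c2 - c3 + (w * u + z0) * (Finset.sum_congr rfl (fun ℓ _ => rfl) :
    (∑ ℓ ∈ Finset.range (n+1), a (ℓ+1) * (((n+1).choose (ℓ+1)) : ℂ) * ((ℓ+1 : ℕ) : ℂ) * u ^ ℓ)
    = _)

lemma laguerre_lead (n : ℕ) (a : ℕ → ℂ) (haN : a (n+1) ≠ 0)
    (ha : ∀ z : ℂ, (∑ ℓ ∈ Finset.range (n+2), a ℓ * ((n+1).choose ℓ : ℂ) * z ^ ℓ) = 0 →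
      ‖z‖ ≤ 1)
    (z0 w : ℂ) (hz0 : 1 < ‖z0‖) (hw : ‖w‖ ≤ 1) :
    z0 * a (n+1) - w * a n ≠ 0 := by
  have hcard : Multiset.card (bpoly (n+1) a).roots = n+1 := bpoly_roots_card (n+1) a haN
  have hroots : ∀ r ∈ (bpoly (n+1) a).roots, ‖r‖ ≤ 1 := by
    intro r hr
    have h0 : (bpoly (n+1) a).eval r = 0 := Polynomial.isRoot_of_mem_roots hr
    rw [bpoly_eval] at h0
    exact ha r h0
  have hcoeffP : ((((bpoly (n+1) a).roots.map fun r => X - C r).prod).coeff n)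
      = -(bpoly (n+1) a).roots.sum := by
    have := Polynomial.multiset_prod_X_sub_C_coeff_card_pred (bpoly (n+1) a).roots
      (by rw [hcard]; omega)
    rwa [hcard, Nat.add_sub_cancel] at this
  have hAn : (bpoly (n+1) a).coeff n = a (n+1) * (-(bpoly (n+1) a).roots.sum) := by
    conv_lhs => rw [bpoly_eq_prod (n+1) a haN]
    rw [coeff_C_mul, hcoeffP]
  have hAn' : (bpoly (n+1) a).coeff n = a n * ((n+1 : ℕ) : ℂ) := by
    rw [bpoly_coeff, if_pos (by omega), Nat.choose_succ_self_right]
  intro hcontra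
  have hz0a : z0 * a (n+1) = w * a n := sub_eq_zero.mp hcontra
  have h1 : a n * ((n+1 : ℕ) : ℂ) = a (n+1) * (-(bpoly (n+1) a).roots.sum) := hAn'.symm.trans hAn
  have key : ((n+1 : ℕ) : ℂ) * z0 = -(w * (bpoly (n+1) a).roots.sum) := by
    apply mul_left_cancel₀ haN
    linear_combination ((n+1 : ℕ) : ℂ) * hz0a + w * h1
  have habs := congrArg (‖·‖) key
  rw [norm_mul, norm_neg, norm_mul, Complex.norm_natCast] at habs
  have hsum : ‖(bpoly (n+1) a).roots.sum‖ ≤ ((n+1 : ℕ) : ℝ) := by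
    have := multiset_abs_sum_le (bpoly (n+1) a).roots hroots
    rwa [hcard] at this
  have h2 : ‖w‖ * ‖(bpoly (n+1) a).roots.sum‖ ≤ ((n+1 : ℕ) : ℝ) := by
    calc ‖w‖ * ‖(bpoly (n+1) a).roots.sum‖ ≤ 1 * ((n+1 : ℕ) : ℝ) :=
      mul_le_mul hw hsum (norm_nonneg _) zero_le_one
    _ = ((n+1 : ℕ) : ℝ) := one_mul _
  have hpos : (0:ℝ) < ((n+1 : ℕ) : ℝ) := by positivity
  nlinarith [habs, h2, hpos, hz0]

lemma laguerre_zeros (n : ℕ) (a : ℕ → ℂ) (haN : a (n+1) ≠ 0)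
    (ha : ∀ z : ℂ, (∑ ℓ ∈ Finset.range (n+2), a ℓ * ((n+1).choose ℓ : ℂ) * z ^ ℓ) = 0 →
      ‖z‖ ≤ 1)
    (z0 w : ℂ) (hz0 : 1 < ‖z0‖) (hw : ‖w‖ ≤ 1) :
    ∀ u : ℂ, (∑ ℓ ∈ Finset.range (n+1),
        (z0 * a (ℓ+1) - w * a ℓ) * (n.choose ℓ : ℂ) * u ^ ℓ) = 0 → ‖u‖ ≤ 1 := by
  intro u hu0
  by_contra hcon
  push_neg at hcon
  -- A basics
  have hAu : (bpoly (n+1) a).eval u ≠ 0 := by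
    rw [bpoly_eval]
    intro h0
    exact absurd (ha u h0) (by linarith)
  have hcard : Multiset.card (bpoly (n+1) a).roots = n+1 := bpoly_roots_card (n+1) a haN
  have hroots : ∀ r ∈ (bpoly (n+1) a).roots, ‖r‖ ≤ 1 := by
    intro r hr
    have h0 : (bpoly (n+1) a).eval r = 0 := Polynomial.isRoot_of_mem_roots hr
    rw [bpoly_eval] at h0
    exact ha r h0
  have hur : ∀ r ∈ (bpoly (n+1) a).roots, u - r ≠ 0 := by
    intro r hr h0
    have := hroots r hr
    rw [sub_eq_zero] at h0
    rw [← h0] at this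
    linarith
  -- the main equation
  have hmain : (z0 + w * u) * (Polynomial.derivative (bpoly (n+1) a)).eval u
      = ((n : ℂ)+1) * w * (bpoly (n+1) a).eval u := by
    have := ident n a z0 w u
    rw [hu0, mul_zero] at this
    rw [bpoly_deriv_eval, bpoly_eval]
    linear_combination this
  -- log derivative
  have hfac := bpoly_eq_prod (n+1) a haN
  have hPu : Polynomial.eval u (((bpoly (n+1) a).roots.map fun r => X - C r).prod) ≠ 0 := by
    intro h0
    apply hAu
    conv_lhs => rw [hfac]
    rw [eval_mul, eval_C, h0, mul_zero]
  have hEu : (bpoly (n+1) a).eval u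
      = a (n+1) * Polynomial.eval u (((bpoly (n+1) a).roots.map fun r => X - C r).prod) := by
    conv_lhs => rw [hfac]
    rw [eval_mul, eval_C]
  have hderiv : (Polynomial.derivative (bpoly (n+1) a)).eval u
      = (bpoly (n+1) a).eval u * ((bpoly (n+1) a).roots.map fun r => (u - r)⁻¹).sum := by
    conv_lhs => rw [hfac]
    rw [derivative_C_mul, eval_mul, eval_C, deriv_prod_eval u _ hur, hEu]
    ring
  have heq2 : (z0 + w * u) * ((bpoly (n+1) a).roots.map fun r => (u - r)⁻¹).sum
      = ((n : ℂ)+1) * w := by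
    apply mul_left_cancel₀ hAu
    rw [hderiv] at hmain
    linear_combination hmain
  -- ball bound
  have hnormSq : 1 < Complex.normSq u := by
    have := Complex.sq_norm u
    nlinarith [norm_nonneg u]
  have hball : ∀ x ∈ ((bpoly (n+1) a).roots.map fun r => (u - r)⁻¹),
      ‖x - (starRingEnd ℂ) u / ((Complex.normSq u : ℂ) - 1)‖
        ≤ 1/(Complex.normSq u - 1) := by
    intro x hx
    obtain ⟨r, hr, rfl⟩ := Multiset.mem_map.mp hx
    rw [← one_div]
    exact (key_iff u r hcon (hur r hr)).mpr (hroots r hr)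
  have hsumball := multiset_sum_ball _ _ _ hball
  rw [Multiset.card_map, hcard] at hsumball
  -- case analysis
  by_cases ht : z0 + w * u = 0
  · rw [ht, zero_mul] at heq2
    have hw0 : w = 0 := by
      have hn1 : ((n : ℂ)+1) ≠ 0 := by
        intro h
        have : ((n+1 : ℕ) : ℂ) = 0 := by push_cast; linear_combination h
        exact_mod_cast (Nat.cast_ne_zero (R := ℂ)).mpr (Nat.succ_ne_zero n) this
      field_simp at heq2
      exact (mul_eq_zero.mp heq2.symm).resolve_left hn1
    rw [hw0, zero_mul, add_zero] at ht
    rw [ht] at hz0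
    simp at hz0
    linarith
  · have hT : ((bpoly (n+1) a).roots.map fun r => (u - r)⁻¹).sum
        = ((n : ℂ)+1) * w / (z0 + w * u) := by
      rw [eq_div_iff ht]
      linear_combination heq2
    have hcast : ((n+1 : ℕ) : ℂ) = (n : ℂ) + 1 := by push_cast; ring
    have hsplit : ((bpoly (n+1) a).roots.map fun r => (u - r)⁻¹).sum
          - ((n+1 : ℕ) : ℂ) * ((starRingEnd ℂ) u / ((Complex.normSq u : ℂ) - 1))
        = ((n+1 : ℕ) : ℂ) * (w / (z0 + w * u)
            - (starRingEnd ℂ) u / ((Complex.normSq u : ℂ) - 1)) := by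
      rw [hT, hcast, mul_sub, mul_div_assoc]
    rw [hsplit] at hsumball
    rw [norm_mul, Complex.norm_natCast] at hsumball
    have hnpos : (0:ℝ) < ((n+1 : ℕ) : ℝ) := by positivity
    have hwt : ‖w / (z0 + w * u)
        - (starRingEnd ℂ) u / ((Complex.normSq u : ℂ) - 1)‖ ≤ 1/(Complex.normSq u - 1) :=
      (mul_le_mul_iff_right₀ hnpos).mp hsumball
    by_cases hww : w = 0
    · rw [hww, zero_div, zero_sub, norm_neg] at hwt
      have : ‖(starRingEnd ℂ) u / ((Complex.normSq u : ℂ) - 1)‖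
          = ‖u‖ / (Complex.normSq u - 1) := by
        rw [norm_div, Complex.norm_conj]
        congr 1
        rw [show ((Complex.normSq u : ℂ) - 1) = ((Complex.normSq u - 1 : ℝ) : ℂ) by push_cast; ring,
          Complex.norm_real, Real.norm_eq_abs, abs_of_pos (by linarith)]
      rw [this] at hwt
      rw [div_le_div_iff₀ (by linarith) (by linarith)] at hwt
      nlinarith
    · set ζ := -z0/w with hζ
      have huζ : u - ζ = (z0 + w * u)/w := by
        rw [hζ]
        field_simp
        ring
      have huζ0 : u - ζ ≠ 0 := by
        rw [huζ]
        exact div_ne_zero ht hww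
      have hwovert : w / (z0 + w * u) = 1/(u - ζ) := by
        rw [huζ, one_div_div]
      rw [hwovert] at hwt
      have hζ1 : ‖ζ‖ ≤ 1 := (key_iff u ζ hcon huζ0).mp hwt
      have : z0 = -ζ * w := by
        rw [hζ]
        field_simp
      rw [this, norm_mul, norm_neg] at hz0
      nlinarith [norm_nonneg ζ, norm_nonneg w]

lemma szego_main : ∀ (n : ℕ) (a b : ℕ → ℂ), a n ≠ 0 → b n ≠ 0 →
    (∀ z : ℂ, (∑ ℓ ∈ Finset.range (n+1), a ℓ * (n.choose ℓ : ℂ) * z ^ ℓ) = 0 →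
      ‖z‖ ≤ 1) →
    (∀ z : ℂ, (∑ ℓ ∈ Finset.range (n+1), b ℓ * (n.choose ℓ : ℂ) * z ^ ℓ) = 0 →
      ‖z‖ ≤ 1) →
    ∀ z : ℂ, 1 < ‖z‖ →
      (∑ ℓ ∈ Finset.range (n+1), a ℓ * b ℓ * (n.choose ℓ : ℂ) * z ^ ℓ) ≠ 0 := by
  intro n
  induction n with
  | zero =>
    intro a b ha0 hb0 _ _ z _
    simpa using mul_ne_zero ha0 hb0
  | succ n IH =>
    intro a b haN hbN ha hb z0 hz0
    -- find a root w of the b-polynomial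
    have hBne : bpoly (n+1) b ≠ 0 := bpoly_ne_zero (n+1) b hbN
    have hBdegpos : 0 < (bpoly (n+1) b).degree := by
      rw [Polynomial.degree_eq_natDegree hBne, bpoly_natDegree (n+1) b hbN]
      exact_mod_cast Nat.succ_pos n
    obtain ⟨w, hwroot⟩ := Complex.exists_root hBdegpos
    have hw1 : ‖w‖ ≤ 1 := by
      apply hb
      rw [← bpoly_eval]
      exact hwroot
    -- factor B = (X - C w) * B₁
    obtain ⟨B₁, hB₁⟩ := (Polynomial.dvd_iff_isRoot.mpr hwroot)
    have hB1ne : B₁ ≠ 0 := by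
      intro h0
      rw [h0, mul_zero] at hB₁
      exact hBne hB₁
    have hB1deg : B₁.natDegree = n := by
      have := bpoly_natDegree (n+1) b hbN
      rw [hB₁, Polynomial.natDegree_mul (Polynomial.X_sub_C_ne_zero w) hB1ne,
        Polynomial.natDegree_X_sub_C] at this
      omega
    have hB1top : B₁.coeff (n+1) = 0 :=
      Polynomial.coeff_eq_zero_of_natDegree_lt (by omega)
    -- coefficients of B via B₁
    have hcoeff_succ : ∀ k : ℕ, (bpoly (n+1) b).coeff (k+1) = B₁.coeff k - w * B₁.coeff (k+1) := by
      intro k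
      rw [hB₁, sub_mul, Polynomial.coeff_sub, Polynomial.coeff_X_mul, Polynomial.coeff_C_mul]
    have hcoeff_zero : (bpoly (n+1) b).coeff 0 = - (w * B₁.coeff 0) := by
      rw [hB₁, Polynomial.mul_coeff_zero, Polynomial.coeff_sub, Polynomial.coeff_X_zero,
        Polynomial.coeff_C_zero]
      ring
    -- define b'
    set b' : ℕ → ℂ := fun ℓ => B₁.coeff ℓ / (n.choose ℓ : ℂ) with hb'def
    have hchoose_ne : ∀ ℓ, ℓ ≤ n → ((n.choose ℓ : ℂ)) ≠ 0 := by
      intro ℓ hℓ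
      exact_mod_cast Nat.cast_ne_zero.mpr (Nat.choose_pos hℓ).ne'
    have hb'c : ∀ ℓ, ℓ ≤ n → b' ℓ * (n.choose ℓ : ℂ) = B₁.coeff ℓ := by
      intro ℓ hℓ
      rw [hb'def]
      exact div_mul_cancel₀ _ (hchoose_ne ℓ hℓ)
    have hb'n : b' n = b (n+1) := by
      have h1 : (bpoly (n+1) b).coeff (n+1) = b (n+1) := by
        rw [bpoly_coeff, if_pos le_rfl, Nat.choose_self]
        simp
      have h2 := hcoeff_succ n
      rw [hB1top, mul_zero, sub_zero] at h2
      rw [hb'def]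
      simp only [Nat.choose_self, Nat.cast_one, div_one]
      rw [← h2, h1]
    have hb'n_ne : b' n ≠ 0 := by rw [hb'n]; exact hbN
    -- B₁ eval as sum
    have hB1eval : ∀ z : ℂ, B₁.eval z
        = ∑ ℓ ∈ Finset.range (n+1), b' ℓ * (n.choose ℓ : ℂ) * z ^ ℓ := by
      intro z
      rw [Polynomial.eval_eq_sum_range' (by omega : B₁.natDegree < n+1)]
      refine Finset.sum_congr rfl fun ℓ hℓ => ?_
      rw [hb'c ℓ (by simp at hℓ; omega)]
    have hb' : ∀ z : ℂ, (∑ ℓ ∈ Finset.range (n+1), b' ℓ * (n.choose ℓ : ℂ) * z ^ ℓ) = 0 →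
        ‖z‖ ≤ 1 := by
      intro z hz
      apply hb
      rw [← bpoly_eval, hB₁, Polynomial.eval_mul]
      rw [← hB1eval z] at hz
      rw [hz, mul_zero]
    -- define a'
    set a' : ℕ → ℂ := fun ℓ => z0 * a (ℓ+1) - w * a ℓ with ha'def
    have ha'n : a' n ≠ 0 := laguerre_lead n a haN ha z0 w hz0 hw1
    have ha' : ∀ z : ℂ, (∑ ℓ ∈ Finset.range (n+1), a' ℓ * (n.choose ℓ : ℂ) * z ^ ℓ) = 0 →
        ‖z‖ ≤ 1 := laguerre_zeros n a haN ha z0 w hz0 hw1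
    -- composition identity
    have key : (∑ ℓ ∈ Finset.range (n+2), a ℓ * b ℓ * ((n+1).choose ℓ : ℂ) * z0 ^ ℓ)
        = ∑ ℓ ∈ Finset.range (n+1), a' ℓ * b' ℓ * (n.choose ℓ : ℂ) * z0 ^ ℓ := by
      have e1 : (∑ ℓ ∈ Finset.range (n+2), a ℓ * b ℓ * ((n+1).choose ℓ : ℂ) * z0 ^ ℓ)
          = ∑ ℓ ∈ Finset.range (n+2), a ℓ * z0 ^ ℓ * (bpoly (n+1) b).coeff ℓ := by
        refine Finset.sum_congr rfl fun ℓ hℓ => ?_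
        rw [bpoly_coeff, if_pos (by simp at hℓ; omega)]
        ring
      rw [e1, Finset.sum_range_succ' _ (n+1)]
      have e2 : ∀ ℓ : ℕ, a (ℓ+1) * z0 ^ (ℓ+1) * (bpoly (n+1) b).coeff (ℓ+1)
          = a (ℓ+1) * z0 ^ (ℓ+1) * B₁.coeff ℓ - w * (a (ℓ+1) * z0 ^ (ℓ+1) * B₁.coeff (ℓ+1)) := by
        intro ℓ
        rw [hcoeff_succ ℓ]
        ring
      rw [Finset.sum_congr rfl fun ℓ _ => e2 ℓ, Finset.sum_sub_distrib, hcoeff_zero]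
      -- now reassemble
      have e3 : (∑ ℓ ∈ Finset.range (n+1), w * (a (ℓ+1) * z0 ^ (ℓ+1) * B₁.coeff (ℓ+1)))
            + (a 0 * z0 ^ 0 * (w * B₁.coeff 0))
          = ∑ ℓ ∈ Finset.range (n+2), w * (a ℓ * z0 ^ ℓ * B₁.coeff ℓ) := by
        rw [Finset.sum_range_succ' (fun ℓ => w * (a ℓ * z0 ^ ℓ * B₁.coeff ℓ)) (n+1)]
        congr 1
        ring
      have e4 : (∑ ℓ ∈ Finset.range (n+2), w * (a ℓ * z0 ^ ℓ * B₁.coeff ℓ))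
          = ∑ ℓ ∈ Finset.range (n+1), w * (a ℓ * z0 ^ ℓ * B₁.coeff ℓ) := by
        rw [Finset.sum_range_succ, hB1top]
        ring_nf
        try ring
      have e5 : (∑ ℓ ∈ Finset.range (n+1), a (ℓ+1) * z0 ^ (ℓ+1) * B₁.coeff ℓ)
            - ∑ ℓ ∈ Finset.range (n+1), w * (a ℓ * z0 ^ ℓ * B₁.coeff ℓ)
          = ∑ ℓ ∈ Finset.range (n+1), a' ℓ * b' ℓ * (n.choose ℓ : ℂ) * z0 ^ ℓ := by
        rw [← Finset.sum_sub_distrib]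
        refine Finset.sum_congr rfl fun ℓ hℓ => ?_
        have hc := hb'c ℓ (by simp at hℓ; omega)
        rw [ha'def]
        simp only
        calc a (ℓ+1) * z0 ^ (ℓ+1) * B₁.coeff ℓ - w * (a ℓ * z0 ^ ℓ * B₁.coeff ℓ)
            = (z0 * a (ℓ+1) - w * a ℓ) * B₁.coeff ℓ * z0 ^ ℓ := by rw [pow_succ]; ring
          _ = (z0 * a (ℓ+1) - w * a ℓ) * b' ℓ * (n.choose ℓ : ℂ) * z0 ^ ℓ := by
              rw [← hc]; ring
      rw [← e5]
      linear_combination -e3 - e4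
    rw [key]
    exact IH a' b' ha'n hb'n_ne ha' hb' z0 hz0

/-- Grace's theorem: if all zeros of `a(z) = Σ a_ℓ C(n,ℓ) z^ℓ` and
`b(z) = Σ b_ℓ C(n,ℓ) z^ℓ` (with `a_n ≠ 0`, `b_n ≠ 0`) lie in the closed unit disk, then
all zeros of the composition `c(z) = Σ a_ℓ b_ℓ C(n,ℓ) z^ℓ` also lie in the closed unit
disk. -/
theorem stmt_11 (n : ℕ) (hn : 1 ≤ n) (a b : ℕ → ℂ) (han : a n ≠ 0) (hbn : b n ≠ 0)
    (ha : ∀ z : ℂ, (∑ ℓ ∈ Finset.range (n + 1), a ℓ * (n.choose ℓ : ℂ) * z ^ ℓ) = 0 →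
      ‖z‖ ≤ 1)
    (hb : ∀ z : ℂ, (∑ ℓ ∈ Finset.range (n + 1), b ℓ * (n.choose ℓ : ℂ) * z ^ ℓ) = 0 →
      ‖z‖ ≤ 1) :
    ∀ z : ℂ, (∑ ℓ ∈ Finset.range (n + 1), a ℓ * b ℓ * (n.choose ℓ : ℂ) * z ^ ℓ) = 0 →
      ‖z‖ ≤ 1 := by
  intro z hz
  by_contra hcon
  push_neg at hcon
  exact szego_main n a b han hbn ha hb z hcon hz
end

section
/- Let n ≥ 1, R > 0, and let a(z) = Σ_{ℓ=0}^{n} a_ℓ C(n,ℓ) z^ℓ and b(z) = Σ_{ℓ=0}^{n} b_ℓ C(n,ℓ) z^ℓ be complex polynomials with a_n ≠ 0 and b_n ≠ 0, and let c(z) = Σ_{ℓ=0}^{n} a_ℓ b_ℓ C(n,ℓ) z^ℓ. If all zeros of a(z) lie in the closed disk {z : |z| ≤ R}, then every zero w of c(z) can be written as w = λ·γ where λ is a zero of b(z) and |γ| ≤ R. -/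
open Polynomial Finset

lemma sq_le_of_le {L R : ℝ} (hL : 0 ≤ L) (hR : 0 ≤ R) (h : L^2 ≤ R^2) : L ≤ R := by
  nlinarith

/-- Key inequality A: if `|u| ≤ r ≤ |z|` then `|r² - conj u * z| ≤ r * |u - z|`. -/
lemma keyA {r : ℝ} {u z : ℂ} (hu : ‖u‖ ≤ r) (hz : r ≤ ‖z‖) :
    ‖(r:ℂ)^2 - (starRingEnd ℂ) u * z‖ ≤ r * ‖u - z‖ := by
  have hr : 0 ≤ r := le_trans (norm_nonneg u) hu
  have h1 : Complex.normSq u ≤ r^2 := by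
    have := Complex.sq_norm u
    nlinarith [norm_nonneg u]
  have h2 : r^2 ≤ Complex.normSq z := by
    have := Complex.sq_norm z
    nlinarith [norm_nonneg z]
  apply sq_le_of_le (norm_nonneg _) (by positivity)
  rw [mul_pow, Complex.sq_norm, Complex.sq_norm]
  simp only [Complex.normSq_apply, Complex.sub_re, Complex.sub_im, Complex.mul_re, Complex.mul_im,
    Complex.ofReal_re, Complex.ofReal_im, Complex.conj_re, Complex.conj_im, ← Complex.ofReal_pow] at *
  ring_nf
  ring_nf at h1 h2
  nlinarith [h1, h2]

/-- Key inequality B (strict): if `|u| < r` and `|lam| < r` then `r * |u - lam| < |r² - conj u * lam|`. -/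
lemma keyB {r : ℝ} {u lam : ℂ} (hu : ‖u‖ < r) (hl : ‖lam‖ < r) :
    r * ‖u - lam‖ < ‖(r:ℂ)^2 - (starRingEnd ℂ) u * lam‖ := by
  have hr : 0 ≤ r := le_trans (norm_nonneg u) hu.le
  have h1 : Complex.normSq u < r^2 := by
    have := Complex.sq_norm u
    nlinarith [norm_nonneg u]
  have h2 : Complex.normSq lam < r^2 := by
    have := Complex.sq_norm lam
    nlinarith [norm_nonneg lam]
  have key : (r * ‖u - lam‖)^2 < (‖(r:ℂ)^2 - (starRingEnd ℂ) u * lam‖)^2 := by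
    rw [mul_pow, Complex.sq_norm, Complex.sq_norm]
    simp only [Complex.normSq_apply, Complex.sub_re, Complex.sub_im, Complex.mul_re, Complex.mul_im,
      Complex.ofReal_re, Complex.ofReal_im, Complex.conj_re, Complex.conj_im, ← Complex.ofReal_pow] at *
    ring_nf
    ring_nf at h1 h2
    nlinarith [h1, h2]
  nlinarith [norm_nonneg ((r:ℂ)^2 - (starRingEnd ℂ) u * lam), mul_nonneg hr (norm_nonneg (u - lam)), key]

lemma logderiv_bound (r : ℝ) (hr : 0 < r) (u : ℂ) (hu : ‖u‖ < r)
    (M : Multiset ℂ) (hM : ∀ z ∈ M, r ≤ ‖z‖) :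
    (M.map fun z => X - C z).prod.eval u ≠ 0 ∧
    ‖(((r:ℂ)^2 - (starRingEnd ℂ) u * u)) * ((M.map fun z => X - C z).prod.derivative.eval u)
        + M.card * (starRingEnd ℂ) u * (M.map fun z => X - C z).prod.eval u‖
      ≤ M.card * r * ‖(M.map fun z => X - C z).prod.eval u‖ := by
  induction M using Multiset.induction with
  | empty => simp
  | cons z M ih =>
    have hz : r ≤ ‖z‖ := hM z (Multiset.mem_cons_self z M)
    obtain ⟨ih1, ih2⟩ := ih (fun w hw => hM w (Multiset.mem_cons_of_mem hw))
    set h := (M.map fun z => X - C z).prod with hh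
    have hprod : ((z ::ₘ M).map fun z => X - C z).prod = (X - C z) * h := by
      rw [Multiset.map_cons, Multiset.prod_cons]
    have huz : u - z ≠ 0 := by
      intro h0
      have : u = z := by linear_combination h0
      rw [this] at hu; linarith
    constructor
    · rw [hprod]
      simp only [eval_mul, eval_sub, eval_X, eval_C]
      exact mul_ne_zero huz ih1
    · rw [hprod]
      have hd : ((X - C z) * h).derivative = h + (X - C z) * h.derivative := by
        rw [derivative_mul]; simp
      rw [hd]
      simp only [eval_add, eval_mul, eval_sub, eval_X, eval_C, Multiset.card_cons]
      set d : ℂ := (r:ℂ)^2 - (starRingEnd ℂ) u * u with hdd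
      have key : d * (h.eval u + (u - z) * h.derivative.eval u)
          + (↑(M.card) + 1) * (starRingEnd ℂ) u * ((u - z) * h.eval u)
          = ((r:ℂ)^2 - (starRingEnd ℂ) u * z) * h.eval u
            + (u - z) * (d * h.derivative.eval u + M.card * (starRingEnd ℂ) u * h.eval u) := by
        rw [hdd]; ring
      push_cast
      rw [key]
      calc ‖_‖ ≤ ‖((r:ℂ)^2 - (starRingEnd ℂ) u * z) * h.eval u‖
            + ‖(u - z) * (d * h.derivative.eval u + M.card * (starRingEnd ℂ) u * h.eval u)‖ :=
              norm_add_le _ _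
        _ ≤ r * ‖u - z‖ * ‖h.eval u‖
            + ‖u - z‖ * (M.card * r * ‖h.eval u‖) := by
            rw [norm_mul, norm_mul]
            gcongr
            · exact keyA hu.le hz
        _ = (↑M.card + 1) * r * ‖(u - z) * h.eval u‖ := by
            rw [norm_mul]; ring

lemma laguerre_roots (r : ℝ) (hr : 0 < r) (n : ℕ) (hn : 1 ≤ n) (g : ℂ[X]) (hg : g ≠ 0)
    (hdeg : g.natDegree ≤ n) (hroots : ∀ z, g.eval z = 0 → r ≤ ‖z‖)
    (lam : ℂ) (hlam : ‖lam‖ < r) (u : ℂ)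
    (hu : (C (n:ℂ) * g + (C lam - X) * g.derivative).eval u = 0) :
    r ≤ ‖u‖ := by
  by_contra hcon
  push_neg at hcon
  have hgu : g.eval u ≠ 0 := fun h0 => absurd (hroots u h0) (not_le.mpr hcon)
  have hsplit : Splits g := IsAlgClosed.splits g
  have hfac := hsplit.eq_prod_roots
  set M := g.roots with hM
  set p := (M.map fun z => X - C z).prod with hp
  have hcard : M.card = g.natDegree := splits_iff_card_roots.mp hsplit
  have hMz : ∀ z ∈ M, r ≤ ‖z‖ := by
    intro z hz
    exact hroots z ((mem_roots hg).mp hz)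
  obtain ⟨hpu, hbound⟩ := logderiv_bound r hr u hcon M hMz
  rw [← hp] at hpu hbound
  set lc := g.leadingCoeff with hlc
  have hlc0 : lc ≠ 0 := leadingCoeff_ne_zero.mpr hg
  have heval : (n:ℂ) * g.eval u + (lam - u) * g.derivative.eval u = 0 := by
    simpa using hu
  have hgderiv : g.derivative = C lc * p.derivative := by
    rw [hfac, derivative_C_mul]
  have hgeval : g.eval u = lc * p.eval u := by rw [hfac]; simp
  have hgdeval : g.derivative.eval u = lc * p.derivative.eval u := by rw [hgderiv]; simp
  have hpeval : (n:ℂ) * p.eval u = (u - lam) * p.derivative.eval u := by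
    have h1 : lc * ((n:ℂ) * p.eval u + (lam - u) * p.derivative.eval u) = 0 := by
      rw [hgeval, hgdeval] at heval; linear_combination heval
    have h2 := (mul_eq_zero.mp h1).resolve_left hlc0
    linear_combination h2
  set d : ℂ := (r:ℂ)^2 - (starRingEnd ℂ) u * u with hd
  set m := M.card with hm
  have hmn : m ≤ n := hcard ▸ hdeg
  have habsu : ‖(starRingEnd ℂ) u‖ ≤ r := by
    rw [Complex.norm_conj]; exact hcon.le
  have hboundn : ‖d * p.derivative.eval u + n * (starRingEnd ℂ) u * p.eval u‖
      ≤ n * r * ‖p.eval u‖ := by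
    have hsplit2 : d * p.derivative.eval u + (n:ℂ) * (starRingEnd ℂ) u * p.eval u
        = (d * p.derivative.eval u + (m:ℂ) * (starRingEnd ℂ) u * p.eval u)
          + ((n - m : ℕ) : ℂ) * (starRingEnd ℂ) u * p.eval u := by
      push_cast [Nat.cast_sub hmn]
      ring
    rw [hsplit2]
    have hb2 : ‖((n - m : ℕ) : ℂ) * (starRingEnd ℂ) u * p.eval u‖
        ≤ ((n - m : ℕ) : ℝ) * r * ‖p.eval u‖ := by
      rw [norm_mul, norm_mul, Complex.norm_natCast]
      have := norm_nonneg (p.eval u)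
      have h3 : ‖(starRingEnd ℂ) u‖ * ‖p.eval u‖ ≤ r * ‖p.eval u‖ :=
        mul_le_mul_of_nonneg_right habsu this
      calc ((n - m : ℕ) : ℝ) * ‖(starRingEnd ℂ) u‖ * ‖p.eval u‖
          = ((n - m : ℕ) : ℝ) * (‖(starRingEnd ℂ) u‖ * ‖p.eval u‖) := by ring
        _ ≤ ((n - m : ℕ) : ℝ) * (r * ‖p.eval u‖) := by
            apply mul_le_mul_of_nonneg_left h3 (by positivity)
        _ = _ := by ring
    calc ‖_‖
        ≤ ‖d * p.derivative.eval u + (m:ℂ) * (starRingEnd ℂ) u * p.eval u‖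
          + ‖((n - m : ℕ) : ℂ) * (starRingEnd ℂ) u * p.eval u‖ := norm_add_le _ _
      _ ≤ m * r * ‖p.eval u‖ + ((n - m : ℕ):ℝ) * r * ‖p.eval u‖ :=
          add_le_add hbound hb2
      _ = n * r * ‖p.eval u‖ := by
          rw [← add_mul, ← add_mul]
          congr 2
          push_cast [Nat.cast_sub hmn]
          ring
  have hkey : ((n:ℂ)) * (((r:ℂ)^2 - (starRingEnd ℂ) u * lam) * p.eval u)
      = (u - lam) * (d * p.derivative.eval u + n * (starRingEnd ℂ) u * p.eval u) := by
    rw [hd]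
    linear_combination ((r:ℂ)^2 - (starRingEnd ℂ) u * u) * hpeval
  have habs := congrArg (‖·‖) hkey
  rw [norm_mul, norm_mul, norm_mul, Complex.norm_natCast] at habs
  have hB := keyB hcon hlam
  have hn0 : (0:ℝ) < n := by exact_mod_cast hn
  have hp0 : 0 < ‖p.eval u‖ := norm_pos_iff.mpr hpu
  have hchain : (n:ℝ) * (‖(r:ℂ)^2 - (starRingEnd ℂ) u * lam‖ * ‖p.eval u‖)
      ≤ ‖u - lam‖ * (n * r * ‖p.eval u‖) :=
    habs ▸ mul_le_mul_of_nonneg_left hboundn (norm_nonneg _)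
  nlinarith [hchain, mul_lt_mul_of_pos_left hB (mul_pos hn0 hp0), norm_nonneg (u - lam)]

noncomputable def pair (n : ℕ) (g q : ℂ[X]) : ℂ :=
  ∑ ℓ ∈ range (n+1), (-1)^ℓ * g.coeff ℓ * q.coeff (n - ℓ) / (n.choose ℓ : ℂ)

lemma polar_coeff (n : ℕ) (g : ℂ[X]) (lam : ℂ) (ℓ : ℕ) :
    (C ((n:ℕ):ℂ) * g + (C lam - X) * g.derivative).coeff ℓ
      = ((n:ℂ) - ℓ) * g.coeff ℓ + lam * (ℓ+1) * g.coeff (ℓ+1) := by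
  rw [coeff_add, coeff_C_mul, sub_mul, coeff_sub, coeff_C_mul, coeff_derivative]
  rcases ℓ with _ | k
  · simp [coeff_derivative]
  · rw [coeff_X_mul, coeff_derivative]
    push_cast
    ring

lemma pairing_step (n : ℕ) (g q : ℂ[X]) (hq : q.natDegree ≤ n) (lam : ℂ) :
    ((n:ℂ)+1) * pair (n+1) g ((X - C lam) * q)
      = pair n (C (((n+1:ℕ)):ℂ) * g + (C lam - X) * g.derivative) q := by
  have hqtop : q.coeff (n+1) = 0 := coeff_eq_zero_of_natDegree_lt (lt_of_le_of_lt hq (by omega))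
  set B := (X - C lam) * q with hB
  have hB0 : B.coeff 0 = -lam * q.coeff 0 := by
    rw [hB, sub_mul, coeff_sub, coeff_C_mul]
    simp
  have hBk : ∀ k, B.coeff (k+1) = q.coeff k - lam * q.coeff (k+1) := by
    intro k
    rw [hB, sub_mul, coeff_sub, coeff_C_mul, coeff_X_mul]
  set A1 := ∑ ℓ ∈ range (n+1), (-1:ℂ)^ℓ * g.coeff ℓ * q.coeff (n-ℓ) / ((n+1).choose ℓ : ℂ) with hA1
  set A2 := ∑ ℓ ∈ range (n+2), (-1:ℂ)^ℓ * g.coeff ℓ * q.coeff (n+1-ℓ) / ((n+1).choose ℓ : ℂ) with hA2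
  -- Step 1 : pair (n+1) g B = A1 - lam * A2
  have step1 : pair (n+1) g B = A1 - lam * A2 := by
    have e0 : pair (n+1) g B
        = (∑ ℓ ∈ range (n+1), (-1:ℂ)^ℓ * g.coeff ℓ * B.coeff (n+1-ℓ) / ((n+1).choose ℓ : ℂ))
          + (-1:ℂ)^(n+1) * g.coeff (n+1) * B.coeff 0 / ((n+1).choose (n+1) : ℂ) := by
      rw [pair, sum_range_succ, Nat.sub_self]
    have e2 : A2 = (∑ ℓ ∈ range (n+1), (-1:ℂ)^ℓ * g.coeff ℓ * q.coeff (n+1-ℓ) / ((n+1).choose ℓ : ℂ))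
          + (-1:ℂ)^(n+1) * g.coeff (n+1) * q.coeff 0 / ((n+1).choose (n+1) : ℂ) := by
      rw [hA2, sum_range_succ, Nat.sub_self]
    have hmain : ∀ ℓ ∈ range (n+1),
        (-1:ℂ)^ℓ * g.coeff ℓ * B.coeff (n+1-ℓ) / ((n+1).choose ℓ : ℂ)
        = (-1:ℂ)^ℓ * g.coeff ℓ * q.coeff (n-ℓ) / ((n+1).choose ℓ : ℂ)
          - lam * ((-1:ℂ)^ℓ * g.coeff ℓ * q.coeff (n+1-ℓ) / ((n+1).choose ℓ : ℂ)) := by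
      intro ℓ hℓ
      rw [mem_range] at hℓ
      rw [show n + 1 - ℓ = (n - ℓ) + 1 by omega, hBk, show n - ℓ + 1 = n + 1 - ℓ by omega]
      ring
    rw [e0, sum_congr rfl hmain, sum_sub_distrib, hA1, e2, hB0]
    rw [← mul_sum]
    ring
  -- choose identities over ℂ
  have hnz1 : ((n:ℂ)+1) ≠ 0 := by
    have : ((n+1:ℕ):ℂ) ≠ 0 := Nat.cast_ne_zero.mpr (by omega)
    push_cast at this; exact this
  have hCn1 : ∀ ℓ, ℓ < n + 1 → ((n.choose ℓ : ℕ) : ℂ)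
      = ((n:ℂ)+1-ℓ) * (((n+1).choose ℓ : ℕ) : ℂ) / ((n:ℂ)+1) := by
    intro ℓ hℓ
    have e1 : (n+1) * (n.choose ℓ) = ((n+1).choose (ℓ+1)) * (ℓ+1) := Nat.add_one_mul_choose_eq n ℓ
    have e2 : ((n+1).choose (ℓ+1)) * (ℓ+1) = ((n+1).choose ℓ) * (n+1-ℓ) := Nat.choose_succ_right_eq (n+1) ℓ
    have hnat : (n+1) * (n.choose ℓ) = ((n+1).choose ℓ) * (n+1-ℓ) := e1.trans e2
    have hc : (((n+1) * (n.choose ℓ) : ℕ) : ℂ) = ((((n+1).choose ℓ) * (n+1-ℓ) : ℕ) : ℂ) := by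
      exact_mod_cast congrArg (Nat.cast : ℕ → ℂ) hnat
    rw [eq_div_iff hnz1]
    push_cast [Nat.cast_sub (by omega : ℓ ≤ n + 1)] at hc ⊢
    linear_combination hc
  have hCn2 : ∀ ℓ, ℓ < n + 1 → (((n+1).choose (ℓ+1) : ℕ) : ℂ)
      = ((n:ℂ)+1-ℓ) * (((n+1).choose ℓ : ℕ) : ℂ) / ((ℓ:ℂ)+1) := by
    intro ℓ hℓ
    have e2 : ((n+1).choose (ℓ+1)) * (ℓ+1) = ((n+1).choose ℓ) * (n+1-ℓ) := Nat.choose_succ_right_eq (n+1) ℓ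
    have hc : ((((n+1).choose (ℓ+1)) * (ℓ+1) : ℕ) : ℂ) = ((((n+1).choose ℓ) * (n+1-ℓ) : ℕ) : ℂ) := by
      exact_mod_cast congrArg (Nat.cast : ℕ → ℂ) e2
    have hℓnz : ((ℓ:ℂ)+1) ≠ 0 := by
      have : ((ℓ+1:ℕ):ℂ) ≠ 0 := Nat.cast_ne_zero.mpr (by omega)
      push_cast at this; exact this
    rw [eq_div_iff hℓnz]
    push_cast [Nat.cast_sub (by omega : ℓ ≤ n + 1)] at hc ⊢
    linear_combination hc
  -- Step 2
  have step2 : pair n (C (((n+1:ℕ)):ℂ) * g + (C lam - X) * g.derivative) q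
      = ((n:ℂ)+1) * A1
        - lam * (((n:ℂ)+1) * (A2 - g.coeff 0 * q.coeff (n+1) / ((n+1).choose 0 : ℂ))) := by
    rw [pair]
    have hterm : ∀ ℓ ∈ range (n+1),
        (-1:ℂ)^ℓ * ((C (((n+1:ℕ)):ℂ) * g + (C lam - X) * g.derivative).coeff ℓ) * q.coeff (n-ℓ) / (n.choose ℓ : ℂ)
        = ((n:ℂ)+1) * ((-1:ℂ)^ℓ * g.coeff ℓ * q.coeff (n-ℓ) / ((n+1).choose ℓ : ℂ))
          - lam * (((n:ℂ)+1) * ((-1:ℂ)^(ℓ+1) * g.coeff (ℓ+1) * q.coeff (n+1-(ℓ+1)) / ((n+1).choose (ℓ+1) : ℂ))) := by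
      intro ℓ hℓ
      rw [mem_range] at hℓ
      rw [polar_coeff (n+1) g lam ℓ]
      rw [show n + 1 - (ℓ+1) = n - ℓ by omega]
      rw [hCn1 ℓ hℓ, hCn2 ℓ hℓ]
      have h1 : (((n+1).choose ℓ : ℕ) : ℂ) ≠ 0 := Nat.cast_ne_zero.mpr (Nat.choose_pos (by omega)).ne'
      have h2 : ((n:ℂ)+1-ℓ) ≠ 0 := by
        have : ((n+1-ℓ:ℕ):ℂ) ≠ 0 := Nat.cast_ne_zero.mpr (by omega)
        rwa [Nat.cast_sub (by omega : ℓ ≤ n + 1), Nat.cast_add, Nat.cast_one] at this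
      have h3 : ((ℓ:ℂ)+1) ≠ 0 := by
        have : ((ℓ+1:ℕ):ℂ) ≠ 0 := Nat.cast_ne_zero.mpr (by omega)
        push_cast at this; exact this
      push_cast
      field_simp
      ring
    rw [sum_congr rfl hterm, sum_sub_distrib, ← mul_sum, ← mul_sum]
    congr 1
    rw [← mul_sum]
    congr 1
    rw [mul_sub]
    congr 1
    -- ∑ ℓ in range (n+1), f (ℓ+1) = A2 - f 0
    have := Finset.sum_range_succ' (fun j => (-1:ℂ)^j * g.coeff j * q.coeff (n+1-j) / ((n+1).choose j : ℂ)) (n+1)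
    rw [hA2, this]
    simp
    ring
  rw [step1, step2, hqtop]
  ring

lemma polar_ne_zero (r : ℝ) (n : ℕ) (hn : 1 ≤ n) (g : ℂ[X])
    (hroots : ∀ z, g.eval z = 0 → r ≤ ‖z‖)
    (lam : ℂ) (hlam : ‖lam‖ < r) :
    C ((n:ℕ):ℂ) * g + (C lam - X) * g.derivative ≠ 0 := by
  intro h0
  have he : (C ((n:ℕ):ℂ) * g + (C lam - X) * g.derivative).eval lam = 0 := by rw [h0]; simp
  simp only [eval_add, eval_mul, eval_C, eval_sub, eval_X, sub_self, zero_mul, add_zero] at he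
  have hn0 : ((n:ℕ):ℂ) ≠ 0 := Nat.cast_ne_zero.mpr (by omega)
  have : g.eval lam = 0 := (mul_eq_zero.mp he).resolve_left hn0
  exact absurd (hroots lam this) (not_le.mpr hlam)

lemma polar_natDegree (n : ℕ) (hn : 1 ≤ n) (g : ℂ[X]) (hdeg : g.natDegree ≤ n) (lam : ℂ) :
    (C ((n:ℕ):ℂ) * g + (C lam - X) * g.derivative).natDegree ≤ n - 1 := by
  rw [natDegree_le_iff_coeff_eq_zero]
  intro m hm
  rw [polar_coeff]
  have hm1 : n ≤ m := by omega
  have hg1 : g.coeff (m+1) = 0 := coeff_eq_zero_of_natDegree_lt (by omega)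
  rcases eq_or_lt_of_le hm1 with h | h
  · rw [hg1, ← h]
    simp
  · have hg0 : g.coeff m = 0 := coeff_eq_zero_of_natDegree_lt (by omega)
    rw [hg0, hg1]
    ring

lemma grace (r : ℝ) (hr : 0 < r) :
    ∀ (n : ℕ) (g : ℂ[X]) (M : Multiset ℂ), g ≠ 0 → g.natDegree ≤ n →
    (∀ z, g.eval z = 0 → r ≤ ‖z‖) → M.card = n → (∀ z ∈ M, ‖z‖ < r) →
    pair n g (M.map fun z => X - C z).prod ≠ 0 := by
  intro n
  induction n with
  | zero =>
    intro g M hg hdeg hroots hcard hM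
    have hM0 : M = 0 := Multiset.card_eq_zero.mp hcard
    rw [hM0, pair]
    have hc0 : g.coeff 0 ≠ 0 := by
      intro h
      exact hg (by rw [eq_C_of_natDegree_le_zero hdeg, h, map_zero])
    simpa using hc0
  | succ n ih =>
    intro g M hg hdeg hroots hcard hM
    have hMne : M ≠ 0 := by intro h; rw [h] at hcard; simp at hcard
    obtain ⟨lam, hlammem⟩ := Multiset.exists_mem_of_ne_zero hMne
    obtain ⟨M', rfl⟩ : ∃ M', M = lam ::ₘ M' := ⟨M.erase lam, (Multiset.cons_erase hlammem).symm⟩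
    have hlam : ‖lam‖ < r := hM lam hlammem
    set q := (M'.map fun z => X - C z).prod with hqdef
    have hcard' : M'.card = n := by
      rw [Multiset.card_cons] at hcard; omega
    have hqdeg : q.natDegree ≤ n := by
      rw [hqdef, natDegree_multiset_prod_X_sub_C_eq_card, hcard']
    have hprod : ((lam ::ₘ M').map fun z => X - C z).prod = (X - C lam) * q := by
      rw [Multiset.map_cons, Multiset.prod_cons]
    set g1 := C (((n+1:ℕ)):ℂ) * g + (C lam - X) * g.derivative with hg1def
    have hg1 : g1 ≠ 0 := polar_ne_zero r (n+1) (by omega) g hroots lam hlam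
    have hg1deg : g1.natDegree ≤ n := by
      have h := polar_natDegree (n+1) (by omega) g hdeg lam
      rw [Nat.add_sub_cancel] at h
      exact h
    have hg1roots : ∀ z, g1.eval z = 0 → r ≤ ‖z‖ := fun u hu =>
      laguerre_roots r hr (n+1) (by omega) g hg hdeg hroots lam hlam u (by
        rw [hg1def] at hu; exact_mod_cast hu)
    have hIH := ih g1 M' hg1 hg1deg hg1roots hcard' (fun z hz => hM z (Multiset.mem_cons_of_mem hz))
    have hps := pairing_step n g q hqdeg lam
    rw [hprod]
    intro h0
    rw [← hg1def] at hps
    rw [h0, mul_zero] at hps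
    exact hIH hps.symm

lemma coeff_sum_CX (n : ℕ) (f : ℕ → ℂ) (k : ℕ) :
    (∑ ℓ ∈ range (n+1), C (f ℓ) * X^ℓ).coeff k = if k ≤ n then f k else 0 := by
  rw [finset_sum_coeff]
  simp only [coeff_C_mul, coeff_X_pow, mul_ite, mul_one, mul_zero]
  rw [Finset.sum_ite_eq (range (n+1)) k f]
  simp [Nat.lt_succ_iff]

/-- Szegő's composition theorem: if all zeros of `a(z) = Σ a_ℓ C(n,ℓ) z^ℓ` lie in the
closed disk `{z : |z| ≤ R}`, then every zero `w` of the Szegő composition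
`c(z) = Σ a_ℓ b_ℓ C(n,ℓ) z^ℓ` can be written `w = λ·γ` with `λ` a zero of
`b(z) = Σ b_ℓ C(n,ℓ) z^ℓ` and `|γ| ≤ R`. -/
theorem stmt_12 (n : ℕ) (hn : 1 ≤ n) (R : ℝ) (hR : 0 < R)
    (a b : ℕ → ℂ) (han : a n ≠ 0) (hbn : b n ≠ 0)
    (ha : ∀ z : ℂ, (∑ ℓ ∈ Finset.range (n + 1), a ℓ * (n.choose ℓ : ℂ) * z ^ ℓ) = 0 →
      ‖z‖ ≤ R) :
    ∀ w : ℂ, (∑ ℓ ∈ Finset.range (n + 1), a ℓ * b ℓ * (n.choose ℓ : ℂ) * w ^ ℓ) = 0 →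
      ∃ lam gam : ℂ,
        (∑ ℓ ∈ Finset.range (n + 1), b ℓ * (n.choose ℓ : ℂ) * lam ^ ℓ) = 0 ∧
        ‖gam‖ ≤ R ∧ w = lam * gam := by
  intro w hw
  -- the polynomial B
  set B : ℂ[X] := ∑ ℓ ∈ range (n+1), C (b ℓ * (n.choose ℓ : ℂ)) * X^ℓ with hBdef
  have hBcoeff : ∀ k, B.coeff k = if k ≤ n then b k * (n.choose k : ℂ) else 0 := fun k =>
    coeff_sum_CX n _ k
  have hBeval : ∀ z : ℂ, B.eval z = ∑ ℓ ∈ range (n + 1), b ℓ * (n.choose ℓ : ℂ) * z ^ ℓ := by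
    intro z
    rw [hBdef, eval_finset_sum]
    simp
  have hBn : B.coeff n = b n := by rw [hBcoeff]; simp
  have hB0 : B ≠ 0 := fun h => hbn (by rw [← hBn, h, coeff_zero])
  have hBdegle : B.natDegree ≤ n := by
    rw [natDegree_le_iff_coeff_eq_zero]
    intro m hm
    rw [hBcoeff, if_neg (by omega)]
  have hBdeg : B.natDegree = n :=
    le_antisymm hBdegle (le_natDegree_of_ne_zero (by rw [hBn]; exact hbn))
  by_cases hw0 : w = 0
  · -- pick any root of B
    have hdegpos : 0 < B.degree := by
      rw [degree_eq_natDegree hB0, hBdeg]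
      exact_mod_cast hn
    obtain ⟨lam, hlam⟩ := Complex.exists_root hdegpos
    exact ⟨lam, 0, by rw [← hBeval]; exact hlam, by simpa using hR.le, by simp [hw0]⟩
  · -- main case
    set r : ℝ := ‖w‖ / R with hrdef
    have hr : 0 < r := div_pos (norm_pos_iff.mpr hw0) hR
    -- suffices : exists root of B with r ≤ |lam|
    suffices h : ∃ lam : ℂ, B.eval lam = 0 ∧ r ≤ ‖lam‖ by
      obtain ⟨lam, hlame, hlamabs⟩ := h
      have hlam0 : lam ≠ 0 := by
        intro h0; rw [h0] at hlamabs; simp at hlamabs; linarith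
      refine ⟨lam, w / lam, by rw [← hBeval]; exact hlame, ?_, by field_simp⟩
      rw [norm_div]
      rw [div_le_iff₀ (norm_pos_iff.mpr (by exact hlam0))]
      rw [hrdef] at hlamabs
      calc ‖w‖ = (‖w‖ / R) * R := by field_simp
        _ ≤ ‖lam‖ * R := by
            apply mul_le_mul_of_nonneg_right hlamabs hR.le
        _ = R * ‖lam‖ := by ring
    by_contra hcon
    push_neg at hcon
    -- all roots of B are < r
    have hBroots : ∀ z, B.eval z = 0 → ‖z‖ < r := fun z hz => hcon z hz
    -- the polynomial g
    set g : ℂ[X] := ∑ m ∈ range (n+1), C ((n.choose m : ℂ) * a (n-m) * (-w)^(n-m)) * X^m with hgdef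
    have hgcoeff : ∀ k, g.coeff k = if k ≤ n then (n.choose k : ℂ) * a (n-k) * (-w)^(n-k) else 0 :=
      fun k => coeff_sum_CX n _ k
    have hg0 : g.coeff 0 = a n * (-w)^n := by rw [hgcoeff]; simp
    have hgne : g ≠ 0 := by
      intro h
      rw [h, coeff_zero] at hg0
      exact han (by
        have := hg0.symm
        rcases mul_eq_zero.mp this with h1 | h2
        · exact h1
        · exact absurd h2 (pow_ne_zero n (neg_ne_zero.mpr hw0)))
    have hgdeg : g.natDegree ≤ n := by
      rw [natDegree_le_iff_coeff_eq_zero]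
      intro m hm
      rw [hgcoeff]
      simp; omega
    have hgroots : ∀ u, g.eval u = 0 → r ≤ ‖u‖ := by
      intro u hu
      have hu0 : u ≠ 0 := by
        intro h0
        rw [h0, ← coeff_zero_eq_eval_zero, hg0] at hu
        rcases mul_eq_zero.mp hu with h1 | h2
        · exact han h1
        · exact absurd h2 (pow_ne_zero n (neg_ne_zero.mpr hw0))
      -- evaluate
      have heval : ∑ m ∈ range (n+1), (n.choose m : ℂ) * a (n-m) * (-w)^(n-m) * u^m = 0 := by
        rw [← hu, hgdef, eval_finset_sum]
        simp [mul_comm]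
      -- reflect
      have hrefl : ∑ m ∈ range (n+1), (n.choose m : ℂ) * a (n-m) * (-w)^(n-m) * u^m
          = ∑ ℓ ∈ range (n+1), (n.choose (n-ℓ) : ℂ) * a ℓ * (-w)^ℓ * u^(n-ℓ) := by
        rw [← Finset.sum_range_reflect]
        apply Finset.sum_congr rfl
        intro ℓ hℓ
        rw [mem_range] at hℓ
        rw [show n + 1 - 1 - ℓ = n - ℓ by omega, show n - (n - ℓ) = ℓ by omega]
      have hkey : (∑ ℓ ∈ range (n+1), a ℓ * (n.choose ℓ : ℂ) * (-w/u)^ℓ) * u^n = 0 := by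
        rw [← heval, hrefl, Finset.sum_mul]
        apply Finset.sum_congr rfl
        intro ℓ hℓ
        rw [mem_range] at hℓ
        have hℓn : ℓ ≤ n := by omega
        rw [Nat.choose_symm hℓn, div_pow, pow_sub₀ u hu0 hℓn]
        ring
      have hsum0 : (∑ ℓ ∈ range (n+1), a ℓ * (n.choose ℓ : ℂ) * (-w/u)^ℓ) = 0 := by
        rcases mul_eq_zero.mp hkey with h | h
        · exact h
        · exact absurd h (pow_ne_zero n hu0)
      have := ha (-w/u) hsum0
      rw [norm_div, norm_neg] at this
      rw [hrdef]
      rw [div_le_iff₀ hR] at *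
      have habsu : 0 < ‖u‖ := norm_pos_iff.mpr hu0
      rw [div_le_iff₀ habsu] at this
      nlinarith [this, habsu, hR]
    -- roots of B
    have hsplit : Splits B := IsAlgClosed.splits B
    have hfac := hsplit.eq_prod_roots
    set M := B.roots with hM
    have hcard : M.card = n := by rw [hM, splits_iff_card_roots.mp hsplit, hBdeg]
    have hMlt : ∀ z ∈ M, ‖z‖ < r := fun z hz =>
      hBroots z ((mem_roots hB0).mp hz)
    set P := (M.map fun z => X - C z).prod with hP
    have hgrace := grace r hr n g M hgne hgdeg hgroots hcard hMlt
    rw [← hP] at hgrace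
    -- contradiction: pair n g P = 0
    apply hgrace
    have hlc : B.leadingCoeff = b n := by rw [leadingCoeff, hBdeg, hBn]
    have hBfac : B = C (b n) * P := by rw [← hlc]; exact hfac
    have hPcoeff : ∀ k, b n * P.coeff k = B.coeff k := by
      intro k
      rw [hBfac, coeff_C_mul]
    have hfinal : b n * pair n g P = 0 := by
      rw [pair, Finset.mul_sum]
      have hterm : ∀ ℓ ∈ range (n+1),
          b n * ((-1:ℂ)^ℓ * g.coeff ℓ * P.coeff (n-ℓ) / (n.choose ℓ : ℂ))
          = (-1:ℂ)^n * (a (n-ℓ) * b (n-ℓ) * ((n.choose (n-ℓ) : ℕ) : ℂ) * w^(n-ℓ)) := by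
        intro ℓ hℓ
        rw [mem_range] at hℓ
        have hℓn : ℓ ≤ n := by omega
        have hchoosene : ((n.choose ℓ : ℕ) : ℂ) ≠ 0 :=
          Nat.cast_ne_zero.mpr (Nat.choose_pos hℓn).ne'
        rw [show b n * ((-1:ℂ)^ℓ * g.coeff ℓ * P.coeff (n-ℓ) / (n.choose ℓ : ℂ))
            = (-1:ℂ)^ℓ * g.coeff ℓ * (b n * P.coeff (n-ℓ)) / (n.choose ℓ : ℂ) by ring]
        rw [hPcoeff, hBcoeff, hgcoeff]
        rw [if_pos hℓn, if_pos (by omega : n - ℓ ≤ n)]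
        rw [Nat.choose_symm hℓn]
        have hneg : (-w)^(n-ℓ) = (-1:ℂ)^(n-ℓ) * w^(n-ℓ) := by
          rw [neg_pow]
        rw [hneg]
        have hsign : (-1:ℂ)^ℓ * (-1:ℂ)^(n-ℓ) = (-1:ℂ)^n := by
          rw [← pow_add, show ℓ + (n - ℓ) = n by omega]
        field_simp
        linear_combination (b (n-ℓ) * a (n-ℓ)) * hsign
      rw [Finset.sum_congr rfl hterm, ← Finset.mul_sum]
      rw [← Finset.sum_range_reflect]
      have : ∀ j ∈ range (n+1),
          a (n - (n+1-1-j)) * b (n - (n+1-1-j)) * ((n.choose (n - (n+1-1-j)) : ℕ) : ℂ) * w^(n - (n+1-1-j))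
          = a j * b j * (n.choose j : ℂ) * w^j := by
        intro j hj
        rw [mem_range] at hj
        rw [show n - (n+1-1-j) = j by omega]
      rw [Finset.sum_congr rfl this, hw, mul_zero]
    rcases mul_eq_zero.mp hfinal with h | h
    · exact absurd h hbn
    · exact h
end

section
/- Let f be a complex polynomial of degree at least one. Then every zero of its derivative f′ lies in the convex hull (in ℂ ≅ ℝ²) of the set of zeros of f. -/
open Polynomial

/-- Gauss–Lucas theorem: every zero of `f′` lies in the convex hull of the zeros of `f`,
for any complex polynomial `f` of degree at least one. -/
theorem stmt_13 (f : ℂ[X]) (hf : 1 ≤ f.degree) :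
    ∀ z : ℂ, f.derivative.IsRoot z → z ∈ convexHull ℝ {w : ℂ | f.IsRoot w} := by
  classical
  intro z hz
  by_cases hfz : f.IsRoot z
  · exact subset_convexHull ℝ _ hfz
  have hf0 : f ≠ 0 := fun h => by simp [h] at hf
  set s : Multiset ℂ := f.roots with hs
  have hsplits : f.Splits := IsAlgClosed.splits f
  have hsplit : f = C f.leadingCoeff * (s.map fun a => X - C a).prod :=
    hsplits.eq_prod_roots
  have hlc : f.leadingCoeff ≠ 0 := leadingCoeff_ne_zero.mpr hf0
  have hsne : s ≠ 0 := by
    have hcard : s.card = f.natDegree := (splits_iff_card_roots.mp hsplits)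
    intro h
    rw [h] at hcard
    simp only [Multiset.card_zero] at hcard
    have : 0 < f.natDegree := natDegree_pos_iff_degree_pos.mpr (lt_of_lt_of_le zero_lt_one hf)
    omega
  have hzr : ∀ r ∈ s, z - r ≠ 0 := by
    intro r hr he
    exact hfz (by rw [sub_eq_zero] at he; exact he ▸ isRoot_of_mem_roots hr)
  -- evaluation of the product at z
  set Pz : ℂ := (s.map fun r => z - r).prod with hPzdef
  have hevalP : eval z ((s.map fun a => X - C a).prod) = Pz := by
    rw [hPzdef, eval_multiset_prod, Multiset.map_map]
    simp [Function.comp]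
  have hPzne : Pz ≠ 0 := by
    intro h
    apply hfz
    have : eval z f = f.leadingCoeff * Pz := by
      conv_lhs => rw [hsplit]
      rw [eval_mul, eval_C, hevalP]
    simp [IsRoot, this, h]
  -- derivative of f at z
  have hder : eval z (derivative ((s.map fun a => X - C a).prod)) = 0 := by
    have h1 : derivative f = C f.leadingCoeff * derivative ((s.map fun a => X - C a).prod) := by
      conv_lhs => rw [hsplit]
      rw [derivative_mul, derivative_C, zero_mul, zero_add]
    have h2 : eval z (derivative f) = 0 := hz
    rw [h1, eval_mul, eval_C] at h2
    exact (mul_eq_zero.mp h2).resolve_left hlc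
  -- sum of reciprocals is zero
  have hsum0 : (s.map fun r => (z - r)⁻¹).sum = 0 := by
    have h1 : derivative ((s.map fun a => X - C a).prod) =
        (s.map fun r => ((s.erase r).map fun a => X - C a).prod).sum := by
      rw [derivative_prod]
      congr 1
      exact Multiset.map_congr rfl fun r _ => by rw [derivative_X_sub_C, mul_one]
    have h2 : eval z (derivative ((s.map fun a => X - C a).prod)) =
        (s.map fun r => ((s.erase r).map fun a => z - a).prod).sum := by
      rw [h1, show (eval z : ℂ[X] → ℂ) = ⇑(evalRingHom z) from rfl, map_multiset_sum,
        Multiset.map_map]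
      congr 1
      refine Multiset.map_congr rfl fun r _ => ?_
      simp only [Function.comp_apply]
      rw [show ⇑(evalRingHom z) = (eval z : ℂ[X] → ℂ) from rfl, eval_multiset_prod,
        Multiset.map_map]
      simp [Function.comp]
    have h3 : ∀ r ∈ s, ((s.erase r).map fun a => z - a).prod = Pz * (z - r)⁻¹ := by
      intro r hr
      have : Pz = (z - r) * ((s.erase r).map fun a => z - a).prod := by
        rw [hPzdef]
        conv_lhs => rw [← Multiset.cons_erase hr]
        rw [Multiset.map_cons, Multiset.prod_cons]
      rw [this, mul_comm (z - r), mul_assoc, mul_inv_cancel₀ (hzr r hr), mul_one]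
    have h4 : (s.map fun r => ((s.erase r).map fun a => z - a).prod).sum
        = Pz * (s.map fun r => (z - r)⁻¹).sum := by
      rw [Multiset.map_congr rfl h3]
      exact Multiset.sum_map_mul_left
    have h5 : Pz * (s.map fun r => (z - r)⁻¹).sum = 0 := by
      rw [← h4, ← h2, hder]
    exact (mul_eq_zero.mp h5).resolve_left hPzne
  -- conjugate: ∑ (z - r) / ‖z - r‖² = 0
  set t : ℂ → ℝ := fun r => (Complex.normSq (z - r))⁻¹ with ht
  have hconj : (s.map fun r => t r • (z - r)).sum = 0 := by
    have := congrArg (starRingEnd ℂ) hsum0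
    rw [map_multiset_sum, Multiset.map_map, map_zero] at this
    rw [← this]
    congr 1
    refine Multiset.map_congr rfl fun r hr => ?_
    show t r • (z - r) = (starRingEnd ℂ) ((z - r)⁻¹)
    rw [map_inv₀, Complex.inv_def, Complex.normSq_conj, Complex.conj_conj, ht,
      Complex.real_smul, Complex.ofReal_inv]
    ring
  -- convert to Finset sums with weights
  set w : ℂ → ℝ := fun r => (s.count r : ℝ) * t r with hw
  have hfin : ∑ r ∈ s.toFinset, w r • (z - r) = 0 := by
    rw [Finset.sum_multiset_map_count] at hconj
    rw [← hconj]
    refine Finset.sum_congr rfl fun r _ => ?_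
    rw [hw, mul_smul, ← Nat.cast_smul_eq_nsmul ℝ (s.count r)]
  have hkey : (∑ r ∈ s.toFinset, w r) • z = ∑ r ∈ s.toFinset, w r • r := by
    have : ∑ r ∈ s.toFinset, (w r • z - w r • r) = 0 := by
      rw [← hfin]
      exact Finset.sum_congr rfl fun r _ => (smul_sub _ _ _).symm
    rw [Finset.sum_sub_distrib, sub_eq_zero] at this
    rw [← this, Finset.sum_smul]
  have hw0 : ∀ r ∈ s.toFinset, 0 ≤ w r := by
    intro r _
    exact mul_nonneg (Nat.cast_nonneg _) (inv_nonneg.mpr (Complex.normSq_nonneg _))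
  have hwpos : 0 < ∑ r ∈ s.toFinset, w r := by
    obtain ⟨r0, hr0⟩ := Multiset.exists_mem_of_ne_zero hsne
    refine Finset.sum_pos' hw0 ⟨r0, Multiset.mem_toFinset.mpr hr0, ?_⟩
    apply mul_pos
    · exact_mod_cast Multiset.count_pos.mpr hr0
    · exact inv_pos.mpr (Complex.normSq_pos.mpr (hzr r0 hr0))
  have hz_eq : z = s.toFinset.centerMass w id := by
    rw [Finset.centerMass]
    simp only [id]
    rw [← hkey, inv_smul_smul₀ hwpos.ne']
  rw [hz_eq]
  exact Finset.centerMass_mem_convexHull _ hw0 hwpos fun r hr =>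
    isRoot_of_mem_roots (Multiset.mem_toFinset.mp hr)
end

section
/- Fix m ≥ 0 and n ≥ 1, and let L_n(z) = z^n − (m/(1+nm))·Σ_{k=0}^{n−1} z^k. Then for every j with 0 ≤ j ≤ n−1: (1/2π)∫_{-π}^{π} L_n(e^{iθ}) e^{-ijθ} dθ + m·L_n(1) = 0; i.e. L_n is orthogonal to z^j with respect to the measure dμ₁(θ) = dθ/(2π) + m·δ(z−1), the normalized Lebesgue measure on the unit circle plus a point mass m at z = 1. -/
open intervalIntegral


lemma aux_exp_int (k : ℤ) :
    (∫ θ : ℝ in (-Real.pi)..Real.pi, Complex.exp ((k : ℂ) * θ * Complex.I))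
      = if k = 0 then (2 * Real.pi : ℂ) else 0 := by
  rcases eq_or_ne k 0 with h | h
  · simp [h, Complex.exp_zero]
    ring
  · have hc : (k : ℂ) * Complex.I ≠ 0 := by
      simp [Complex.I_ne_zero, h]
    have heq : ∀ θ : ℝ, (k : ℂ) * θ * Complex.I = ((k : ℂ) * Complex.I) * θ := by
      intro θ; ring
    simp only [heq]
    rw [integral_exp_mul_complex hc]
    have h1 : Complex.exp ((k : ℂ) * Complex.I * Real.pi) = (-1 : ℂ) ^ k := by
      rw [show (k : ℂ) * Complex.I * Real.pi = k * (Real.pi * Complex.I) by ring,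
        Complex.exp_int_mul, Complex.exp_pi_mul_I]
    have h2 : Complex.exp ((k : ℂ) * Complex.I * (-Real.pi : ℝ)) = (-1 : ℂ) ^ (-k) := by
      rw [show ((k : ℂ) * Complex.I * ((-Real.pi : ℝ) : ℂ)) = (-k : ℤ) * (Real.pi * Complex.I) by push_cast; ring,
        Complex.exp_int_mul, Complex.exp_pi_mul_I]
    have h3 : ((-1 : ℂ)) ^ (-k) = (-1 : ℂ) ^ k := by
      rw [zpow_neg, ← inv_zpow, inv_neg, inv_one]
    rw [h1, h2, h3]
    simp [h]

lemma aux_cont (k : ℤ) :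
    IntervalIntegrable (fun θ : ℝ => Complex.exp ((k : ℂ) * θ * Complex.I))
      MeasureTheory.volume (-Real.pi) Real.pi := by
  apply Continuous.intervalIntegrable
  fun_prop


/-- For `m ≥ 0`, `n ≥ 1`, and `L_n(z) = z^n − (m/(1+nm)) Σ_{k=0}^{n−1} z^k`, the
polynomial `L_n` is orthogonal to `z^j` for `0 ≤ j ≤ n−1` with respect to the measure
`dμ₁(θ) = dθ/(2π) + m δ(z−1)` on the unit circle: for all `j < n`,
`(1/2π)∫_{-π}^{π} L_n(e^{iθ}) e^{-ijθ} dθ + m·L_n(1) = 0`. -/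
theorem stmt_16 (m : ℝ) (hm : 0 ≤ m) (n : ℕ) (hn : 1 ≤ n)
    (Ln : ℂ → ℂ)
    (hLn : ∀ z : ℂ, Ln z = z ^ n - ((m : ℂ) / (1 + n * m)) * ∑ k ∈ Finset.range n, z ^ k) :
    ∀ j < n,
      (1 / (2 * (Real.pi : ℂ))) *
          (∫ θ in (-Real.pi)..Real.pi,
            Ln (Complex.exp (θ * Complex.I)) * Complex.exp (-(j : ℂ) * θ * Complex.I))
        + (m : ℂ) * Ln 1 = 0 := by
  intro j hj
  set c : ℂ := (m : ℂ) / (1 + n * m) with hc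
  have hdenR : (0 : ℝ) < 1 + n * m := by positivity
  have hden : (1 : ℂ) + n * m ≠ 0 := by
    have : ((1 + n * m : ℝ) : ℂ) ≠ 0 := Complex.ofReal_ne_zero.mpr hdenR.ne'
    push_cast at this
    exact this
  have term : ∀ (a : ℕ) (θ : ℝ),
      Complex.exp (θ * Complex.I) ^ a * Complex.exp (-(j : ℂ) * θ * Complex.I)
        = Complex.exp (((((a : ℤ) - j) : ℤ) : ℂ) * θ * Complex.I) := by
    intro a θ
    rw [← Complex.exp_nat_mul, ← Complex.exp_add]
    congr 1
    push_cast
    ring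
  have key : ∀ θ : ℝ,
      Ln (Complex.exp (θ * Complex.I)) * Complex.exp (-(j : ℂ) * θ * Complex.I)
        = Complex.exp (((((n : ℤ) - j) : ℤ) : ℂ) * θ * Complex.I)
          - c * ∑ k ∈ Finset.range n,
              Complex.exp (((((k : ℤ) - j) : ℤ) : ℂ) * θ * Complex.I) := by
    intro θ
    rw [hLn, sub_mul, mul_assoc c, Finset.sum_mul]
    simp only [term]
  simp only [key]
  have hInt2 : IntervalIntegrable
      (fun θ : ℝ => c * ∑ k ∈ Finset.range n,
        Complex.exp (((((k : ℤ) - j) : ℤ) : ℂ) * θ * Complex.I))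
      MeasureTheory.volume (-Real.pi) Real.pi := by
    apply Continuous.intervalIntegrable
    fun_prop
  rw [intervalIntegral.integral_sub (aux_cont _) hInt2,
    intervalIntegral.integral_const_mul,
    intervalIntegral.integral_finset_sum (fun k _ => aux_cont _)]
  simp only [aux_exp_int]
  have hjn : (j : ℤ) < (n : ℤ) := by exact_mod_cast hj
  rw [if_neg (by omega : ((n : ℤ) - j) ≠ 0)]
  have hsum : (∑ k ∈ Finset.range n, if ((k : ℤ) - j = 0) then (2 * Real.pi : ℂ) else 0)
      = 2 * Real.pi := by
    have : ∀ k ∈ Finset.range n,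
        (if ((k : ℤ) - j = 0) then (2 * Real.pi : ℂ) else 0)
          = if k = j then (2 * Real.pi : ℂ) else 0 := by
      intro k _
      congr 1
      simp [sub_eq_zero]
    rw [Finset.sum_congr rfl this, Finset.sum_ite_eq' (Finset.range n) j,
      if_pos (Finset.mem_range.mpr hj)]
  rw [hsum, hLn]
  simp only [one_pow, Finset.sum_const, Finset.card_range, nsmul_eq_mul, mul_one]
  have hpi : (Real.pi : ℂ) ≠ 0 := Complex.ofReal_ne_zero.mpr Real.pi_ne_zero
  field_simp [hc]
  have hcm : c * (1 + n * m) = m := by rw [hc]; exact div_mul_cancel₀ _ hden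
  linear_combination (-2 * (Real.pi : ℂ)) * hcm
end

section
/- Let n ≥ 1 and let L_n(z) = Σ_{k=0}^{n} ((k+1)/(n+1)) z^k. Then for every j with 0 ≤ j ≤ n−1: (1/2π)∫_{-π}^{π} L_n(e^{iθ}) e^{-ijθ} |e^{iθ}−1|² dθ = 0; i.e. L_n is orthogonal to z^j with respect to the measure dμ₂(θ) = |e^{iθ}−1|²·dθ/(2π) on the unit circle. -/
open intervalIntegral

noncomputable def E (m : ℤ) (θ : ℝ) : ℂ := Complex.exp ((m : ℂ) * θ * Complex.I)

lemma E_mul (m l : ℤ) (θ : ℝ) : E m θ * E l θ = E (m + l) θ := by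
  simp only [E, ← Complex.exp_add]
  congr 1
  push_cast
  ring

lemma E_cont (m : ℤ) : Continuous (E m) := by
  unfold E; fun_prop

lemma E_integrable (m : ℤ) : IntervalIntegrable (E m) MeasureTheory.volume (-Real.pi) Real.pi :=
  (E_cont m).intervalIntegrable _ _

lemma E_integral (m : ℤ) :
    ∫ θ in (-Real.pi)..Real.pi, E m θ = if m = 0 then 2 * (Real.pi : ℂ) else 0 := by
  rcases eq_or_ne m 0 with h | h
  · simp [E, h, two_mul]
  · have hc : (m : ℂ) * Complex.I ≠ 0 := by
      simp [Complex.I_ne_zero, h]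
    have key : ∀ θ : ℝ, E m θ = Complex.exp (((m : ℂ) * Complex.I) * θ) := by
      intro θ; unfold E; ring_nf
    simp only [key]
    rw [integral_exp_mul_complex hc, if_neg h]
    have h1 : ((m : ℂ) * Complex.I) * ((Real.pi : ℝ) : ℂ) = (m : ℂ) * ((Real.pi : ℂ) * Complex.I) := by
      ring
    have h2 : ((m : ℂ) * Complex.I) * ((-Real.pi : ℝ) : ℂ) = ((-m : ℤ) : ℂ) * ((Real.pi : ℂ) * Complex.I) := by
      push_cast; ring
    rw [h1, h2, show (m : ℂ) = ((m : ℤ) : ℂ) from rfl, Complex.exp_int_mul, Complex.exp_int_mul,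
      Complex.exp_pi_mul_I]
    rw [zpow_neg, ← inv_zpow, inv_neg, inv_one, sub_self, zero_div]

/-- For `n ≥ 1` and `L_n(z) = Σ_{k=0}^{n} ((k+1)/(n+1)) z^k`, the polynomial `L_n` is
orthogonal to `z^j` for `0 ≤ j ≤ n−1` with respect to `dμ₂(θ) = |e^{iθ}−1|² dθ/(2π)`:
for all `j < n`, `(1/2π)∫_{-π}^{π} L_n(e^{iθ}) e^{-ijθ} |e^{iθ}−1|² dθ = 0`. -/
theorem stmt_18 (n : ℕ) (hn : 1 ≤ n) :
    ∀ j < n,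
      (1 / (2 * (Real.pi : ℂ))) *
        ∫ θ in (-Real.pi)..Real.pi,
          (∑ k ∈ Finset.range (n + 1),
              (((k : ℂ) + 1) / ((n : ℂ) + 1)) * Complex.exp (θ * Complex.I) ^ k) *
            Complex.exp (-(j : ℂ) * θ * Complex.I) *
            (((‖Complex.exp (θ * Complex.I) - 1‖ : ℝ) : ℂ)) ^ 2 = 0 := by
  intro j hj
  have hn1 : ((n : ℂ) + 1) ≠ 0 := Nat.cast_add_one_ne_zero n
  set c : ℕ → ℂ := fun k => ((k : ℂ) + 1) / ((n : ℂ) + 1) with hcdef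
  rw [mul_eq_zero]; right
  have hpt : Set.EqOn
      (fun θ : ℝ => (∑ k ∈ Finset.range (n + 1), c k * Complex.exp (θ * Complex.I) ^ k) *
        Complex.exp (-(j : ℂ) * θ * Complex.I) *
        (((‖Complex.exp (θ * Complex.I) - 1‖ : ℝ) : ℂ)) ^ 2)
      (fun θ : ℝ =>
        (∑ k ∈ Finset.range (n + 1), (c k * 2) * E ((k : ℤ) - j) θ)
        - (∑ k ∈ Finset.range (n + 1), c k * E ((k : ℤ) - j + 1) θ)
        - (∑ k ∈ Finset.range (n + 1), c k * E ((k : ℤ) - j - 1) θ))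
      (Set.uIcc (-Real.pi) Real.pi) := by
    intro θ _
    simp only
    have hinv : Complex.exp (θ * Complex.I) * Complex.exp (-(θ * Complex.I)) = 1 := by
      rw [← Complex.exp_add]; simp
    have habs : (((‖Complex.exp (θ * Complex.I) - 1‖ : ℝ) : ℂ)) ^ 2
        = 2 - E 1 θ - E (-1) θ := by
      have h0 : (((‖Complex.exp (θ * Complex.I) - 1‖ : ℝ) : ℂ)) ^ 2
          = (Complex.exp (θ * Complex.I) - 1) *
            (starRingEnd ℂ) (Complex.exp (θ * Complex.I) - 1) := by
        rw [Complex.mul_conj, ← Complex.sq_norm]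
        push_cast
        ring
      have h1 : (starRingEnd ℂ) (Complex.exp (θ * Complex.I) - 1)
          = Complex.exp (-(θ * Complex.I)) - 1 := by
        rw [map_sub, ← Complex.exp_conj, map_mul, Complex.conj_I, Complex.conj_ofReal]
        simp [mul_comm]
      have hE1 : E 1 θ = Complex.exp (θ * Complex.I) := by unfold E; norm_num
      have hEm1 : E (-1) θ = Complex.exp (-(θ * Complex.I)) := by
        unfold E; push_cast; ring_nf
      rw [h0, h1, hE1, hEm1]
      linear_combination hinv
    have hk : ∀ k : ℕ, Complex.exp (θ * Complex.I) ^ k = E (k : ℤ) θ := by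
      intro k
      unfold E
      rw [show (((k : ℤ) : ℂ)) * θ * Complex.I = ((k : ℤ) : ℂ) * (θ * Complex.I) by ring,
        Complex.exp_int_mul, zpow_natCast]
    have hj' : Complex.exp (-(j : ℂ) * θ * Complex.I) = E (-(j : ℤ)) θ := by
      unfold E; push_cast; ring_nf
    rw [habs, hj']
    simp only [hk]
    rw [Finset.sum_mul, Finset.sum_mul, ← Finset.sum_sub_distrib, ← Finset.sum_sub_distrib]
    refine Finset.sum_congr rfl fun k _ => ?_
    have e1 : E (k : ℤ) θ * E (-(j : ℤ)) θ = E ((k : ℤ) - j) θ := by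
      rw [E_mul]; congr 1
    have e2 : E ((k : ℤ) - j) θ * E 1 θ = E ((k : ℤ) - j + 1) θ := E_mul _ _ θ
    have e3 : E ((k : ℤ) - j) θ * E (-1) θ = E ((k : ℤ) - j - 1) θ := by
      rw [E_mul]; congr 1
    calc c k * E (k : ℤ) θ * E (-(j : ℤ)) θ * (2 - E 1 θ - E (-1) θ)
        = c k * 2 * (E (k : ℤ) θ * E (-(j : ℤ)) θ)
          - c k * ((E (k : ℤ) θ * E (-(j : ℤ)) θ) * E 1 θ)
          - c k * ((E (k : ℤ) θ * E (-(j : ℤ)) θ) * E (-1) θ) := by ring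
      _ = _ := by rw [e1, e2, e3]
  rw [intervalIntegral.integral_congr hpt]
  have hint : ∀ (f : ℕ → ℂ) (g : ℕ → ℤ),
      IntervalIntegrable (fun θ => ∑ k ∈ Finset.range (n + 1), f k * E (g k) θ)
        MeasureTheory.volume (-Real.pi) Real.pi := by
    intro f g
    apply Continuous.intervalIntegrable
    exact continuous_finset_sum _ fun k _ => continuous_const.mul (E_cont (g k))
  rw [integral_sub ((hint _ _).sub (hint _ _)) (hint _ _),
    integral_sub (hint _ _) (hint _ _),
    intervalIntegral.integral_finset_sum (f := fun k θ => c k * 2 * E ((k : ℤ) - j) θ)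
      (fun k _ => ((continuous_const.mul (E_cont _)).intervalIntegrable _ _)),
    intervalIntegral.integral_finset_sum (f := fun k θ => c k * E ((k : ℤ) - j + 1) θ)
      (fun k _ => ((continuous_const.mul (E_cont _)).intervalIntegrable _ _)),
    intervalIntegral.integral_finset_sum (f := fun k θ => c k * E ((k : ℤ) - j - 1) θ)
      (fun k _ => ((continuous_const.mul (E_cont _)).intervalIntegrable _ _))]
  simp only [intervalIntegral.integral_const_mul, E_integral]
  have s1 : (∑ k ∈ Finset.range (n + 1),
      (c k * 2) * (if ((k : ℤ) - j = 0) then 2 * (Real.pi : ℂ) else 0))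
      = c j * 2 * (2 * (Real.pi : ℂ)) := by
    rw [Finset.sum_eq_single j]
    · rw [if_pos (by simp)]
    · intro k _ hk
      rw [if_neg (by intro h; exact hk (by exact_mod_cast sub_eq_zero.mp h)), mul_zero]
    · intro h; exact absurd (Finset.mem_range.mpr (by omega)) h
  have s3 : (∑ k ∈ Finset.range (n + 1),
      c k * (if ((k : ℤ) - j - 1 = 0) then 2 * (Real.pi : ℂ) else 0))
      = c (j + 1) * (2 * (Real.pi : ℂ)) := by
    rw [Finset.sum_eq_single (j + 1)]
    · rw [if_pos (by push_cast; ring)]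
    · intro k _ hk
      rw [if_neg (by intro h; exact hk (by omega)), mul_zero]
    · intro h; exact absurd (Finset.mem_range.mpr (by omega)) h
  rw [s1, s3]
  rcases j with _ | j'
  · have s2 : (∑ k ∈ Finset.range (n + 1),
        c k * (if ((k : ℤ) - (0 : ℕ) + 1 = 0) then 2 * (Real.pi : ℂ) else 0)) = 0 := by
      apply Finset.sum_eq_zero
      intro k _
      rw [if_neg (by omega), mul_zero]
    rw [s2]
    simp only [hcdef]
    push_cast
    field_simp
    ring
  · have s2 : (∑ k ∈ Finset.range (n + 1),
        c k * (if ((k : ℤ) - (j' + 1 : ℕ) + 1 = 0) then 2 * (Real.pi : ℂ) else 0))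
        = c j' * (2 * (Real.pi : ℂ)) := by
      rw [Finset.sum_eq_single j']
      · rw [if_pos (by push_cast; ring)]
      · intro k _ hk
        rw [if_neg (by intro h; exact hk (by omega)), mul_zero]
      · intro h; exact absurd (Finset.mem_range.mpr (by omega)) h
    rw [s2]
    simp only [hcdef]
    push_cast
    field_simp
    ring
end
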